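/- arXiv:1606.07489 — 3 statements merged into one kernel-verified Lean document; each statement's English description precedes it below -/
import Mathlib

section
/- Let A and B be countable structures. For every continuous group isomorphism H : Aut(B) → Aut(A), there is a Borel adjoint equivalence of categories (F, G, η, ε) between Iso(B) and Iso(A) with F(B) = A such that the restriction of F to Aut(B) is H. -/
namespace Paper

/-- A structure in a (countable) relational language with arity function `L`,
with domain `ω`.  `rel i` is the interpretation of the `i`-th relation symbol,
of arity `L i`. -/
structure Str (L : ℕ → ℕ) where
  rel : ∀ i, (Fin (L i) → ℕ) → Bool

/-- `g` is an isomorphism from `M` to `N`. -/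
def IsIso {L : ℕ → ℕ} (M N : Str L) (g : ℕ ≃ ℕ) : Prop :=
  ∀ i (v : Fin (L i) → ℕ), M.rel i v = N.rel i fun k => g (v k)

theorem isIso_refl {L : ℕ → ℕ} (M : Str L) : IsIso M M (Equiv.refl ℕ) := fun _ _ => rfl

/-- The automorphism group of `M`, as a subgroup of `S_∞ = Equiv.Perm ℕ`. -/
def aut {L : ℕ → ℕ} (M : Str L) : Subgroup (Equiv.Perm ℕ) where
  carrier := {g | IsIso M M g}
  one_mem' := isIso_refl M
  mul_mem' := by
    intro a b ha hb i v
    exact (hb i v).trans (ha i fun k => b (v k))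
  inv_mem' := by
    intro a ha i v
    have h := ha i fun k => a⁻¹ (v k)
    simpa using h.symm

theorem mem_aut {L : ℕ → ℕ} {M : Str L} {g : Equiv.Perm ℕ} (h : g ∈ aut M) : IsIso M M g := h

/-- The topology of pointwise convergence on `S_∞ = Equiv.Perm ℕ`, i.e. the topology
induced from Baire space `ω^ω`; automorphism groups of countable structures carry the
subspace topology. -/
instance : TopologicalSpace (Equiv.Perm ℕ) :=
  TopologicalSpace.induced (fun g => (g : ℕ → ℕ)) inferInstance

end Paper
namespace Paper

def Isomorphic {L : ℕ → ℕ} (M N : Str L) : Prop := ∃ g : ℕ ≃ ℕ, IsIso M N g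

/-- The copies of `B`: structures with domain `ω` isomorphic to `B`.  These are the
objects of the category `Iso(B)`; the morphisms are the isomorphisms between copies. -/
abbrev Copy {L : ℕ → ℕ} (B : Str L) := {M : Str L // Isomorphic M B}

def selfCopy {L : ℕ → ℕ} (B : Str L) : Copy B := ⟨B, ⟨Equiv.refl ℕ, isIso_refl B⟩⟩

/-- A functor from `Iso(B)` to `Iso(A)`: it maps copies of `B` to copies of `A` and
isomorphisms between copies of `B` to isomorphisms between the corresponding copies
of `A`, preserving identity and composition (Definition 1.8). -/
structure IsoFunctor {LB LA : ℕ → ℕ} (B : Str LB) (A : Str LA) where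
  obj : Copy B → Copy A
  map : ∀ (M N : Copy B) (g : ℕ ≃ ℕ), IsIso M.1 N.1 g → (ℕ ≃ ℕ)
  map_iso : ∀ M N g hg, IsIso (obj M).1 (obj N).1 (map M N g hg)
  map_id : ∀ (M : Copy B) (h : IsIso M.1 M.1 (Equiv.refl ℕ)),
    map M M (Equiv.refl ℕ) h = Equiv.refl ℕ
  map_comp : ∀ (M N P : Copy B) (g₁ : ℕ ≃ ℕ) (h₁ : IsIso M.1 N.1 g₁)
    (g₂ : ℕ ≃ ℕ) (h₂ : IsIso N.1 P.1 g₂) (h₃ : IsIso M.1 P.1 (g₁.trans g₂)),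
    map M P (g₁.trans g₂) h₃ = (map M N g₁ h₁).trans (map N P g₂ h₂)

/-- Codes of structures with domain `ω` as elements of Cantor space. -/
abbrev ObjCode (L : ℕ → ℕ) := (Σ i : ℕ, (Fin (L i) → ℕ)) → Bool

def codeStr {L : ℕ → ℕ} (M : Str L) : ObjCode L := fun p => M.rel p.1 p.2

/-- A functor is Borel if its action on objects and its action on morphisms are
given by Borel operators on the codes. -/
def IsBorelFunctor {LB LA : ℕ → ℕ} {B : Str LB} {A : Str LA} (F : IsoFunctor B A) : Prop :=
  ∃ (Φ : ObjCode LB → ObjCode LA) (Ψ : ObjCode LB × (ℕ → ℕ) × ObjCode LB → (ℕ → ℕ)),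
    Measurable Φ ∧ Measurable Ψ ∧
    (∀ M : Copy B, codeStr (F.obj M).1 = Φ (codeStr M.1)) ∧
    (∀ M N g hg, ⇑(F.map M N g hg) = Ψ (codeStr M.1, ⇑g, codeStr N.1))

/-- Natural isomorphism of functors `Iso(B) → Iso(A)` (Definition 1.9). -/
def NatIso {LB LA : ℕ → ℕ} {B : Str LB} {A : Str LA} (F G : IsoFunctor B A) : Prop :=
  ∃ η : Copy B → (ℕ ≃ ℕ),
    (∀ M, IsIso (F.obj M).1 (G.obj M).1 (η M)) ∧
    (∀ (M N : Copy B) (g : ℕ ≃ ℕ) (hg : IsIso M.1 N.1 g),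
      (η M).trans (G.map M N g hg) = (F.map M N g hg).trans (η N))

end Paper
namespace Paper

/-- An adjoint equivalence between the categories `Iso(B)` and `Iso(A)`
(Definition 1.11): functors in both directions together with natural isomorphisms
`η : id → G∘F` and `ε : id → F∘G` satisfying the triangle identities
`F(η_M) = ε_{F(M)}` and `G(ε_N) = η_{G(N)}`. -/
structure AdjEquiv {LB LA : ℕ → ℕ} (B : Str LB) (A : Str LA) where
  F : IsoFunctor B A
  G : IsoFunctor A B
  η : Copy B → (ℕ ≃ ℕ)
  ε : Copy A → (ℕ ≃ ℕ)
  η_iso : ∀ M : Copy B, IsIso M.1 (G.obj (F.obj M)).1 (η M)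
  ε_iso : ∀ N : Copy A, IsIso N.1 (F.obj (G.obj N)).1 (ε N)
  η_nat : ∀ (M M' : Copy B) (g : ℕ ≃ ℕ) (hg : IsIso M.1 M'.1 g),
    (η M).trans (G.map (F.obj M) (F.obj M') (F.map M M' g hg) (F.map_iso M M' g hg)) =
      g.trans (η M')
  ε_nat : ∀ (N N' : Copy A) (g : ℕ ≃ ℕ) (hg : IsIso N.1 N'.1 g),
    (ε N).trans (F.map (G.obj N) (G.obj N') (G.map N N' g hg) (G.map_iso N N' g hg)) =
      g.trans (ε N')
  triangleF : ∀ M : Copy B, F.map M (G.obj (F.obj M)) (η M) (η_iso M) = ε (F.obj M)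
  triangleG : ∀ N : Copy A, G.map N (F.obj (G.obj N)) (ε N) (ε_iso N) = η (G.obj N)

/-- An adjoint equivalence is Borel if `F`, `G`, `η` and `ε` are given by Borel
operators on the codes. -/
def IsBorelAdjEquiv {LB LA : ℕ → ℕ} {B : Str LB} {A : Str LA} (E : AdjEquiv B A) : Prop :=
  IsBorelFunctor E.F ∧ IsBorelFunctor E.G ∧
    (∃ u : ObjCode LB → (ℕ → ℕ), Measurable u ∧ ∀ M : Copy B, u (codeStr M.1) = ⇑(E.η M)) ∧
    (∃ v : ObjCode LA → (ℕ → ℕ), Measurable v ∧ ∀ N : Copy A, v (codeStr N.1) = ⇑(E.ε N))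

end Paper

/-!
For every copy `M` of `B` choose an isomorphism `ρ_M : B → M`, Borel in the code of `M`, with
`ρ_B = id`, and likewise `σ_N : A → N`. Then `F` sends every copy of `B` to `A` and `g : M → N`
to `H (ρ_N⁻¹ g ρ_M)`, `G` is built in the same way from `H⁻¹` and `σ`, and `η_M = ρ_M⁻¹`,
`ε_N = σ_N⁻¹`; functoriality, naturality and the triangle identities are then identities in the
groups `Aut(B)` and `Aut(A)`.

The Borel choice of `ρ` comes from Scott analysis: the back-and-forth relations between a copy of
`B` and `B` stabilise at a countable ordinal, where they are Borel in the code of the copy, and a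
greedy back-and-forth along the stable relation, always taking least witnesses, produces the
isomorphism. Being continuous, `H` extends to a Borel map on Baire space, and by Lusin–Souslin so
does its inverse.
-/

namespace Paper

section Isomorphisms

variable {L : ℕ → ℕ} {M N P : Str L} {g h : ℕ ≃ ℕ}

lemma isIso_trans (hg : IsIso M N g) (hh : IsIso N P h) : IsIso M P (g.trans h) :=
  fun i v => (hg i v).trans (hh i _)

lemma isIso_symm (hg : IsIso M N g) : IsIso N M g.symm := fun i v => by
  simpa using (hg i fun k => g.symm (v k)).symm

end Isomorphisms

structure IsBackForthSystem (S : List (ℕ × ℕ) → Prop) : Prop where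
  nil : S []
  forth : ∀ p, S p → ∀ a, ∃ b, S ((a, b) :: p)
  back : ∀ p, S p → ∀ b, ∃ a, S ((a, b) :: p)
  coherent : ∀ p, S p → ∀ q ∈ p, ∀ q' ∈ p, q.1 = q'.1 ↔ q.2 = q'.2

section BackForth

variable (S : List (ℕ × ℕ) → Prop)

noncomputable def bfForth (a : ℕ) (p : List (ℕ × ℕ)) : List (ℕ × ℕ) :=
  (a, sInf {b | S ((a, b) :: p)}) :: p

noncomputable def bfBack (b : ℕ) (p : List (ℕ × ℕ)) : List (ℕ × ℕ) :=
  (sInf {a | S ((a, b) :: p)}, b) :: p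

noncomputable def bfSeq : ℕ → List (ℕ × ℕ)
  | 0 => []
  | k + 1 => bfBack S k (bfForth S k (bfSeq k))

noncomputable def bfFun (a : ℕ) : ℕ := sInf {b | S ((a, b) :: bfSeq S a)}

noncomputable def bfInv (b : ℕ) : ℕ := sInf {a | S ((a, b) :: bfForth S b (bfSeq S b))}

lemma bfSeq_succ (k : ℕ) :
    bfSeq S (k + 1) = (bfInv S k, k) :: (k, bfFun S k) :: bfSeq S k := rfl

lemma bfSeq_suffix {k m : ℕ} (h : k ≤ m) : bfSeq S k <:+ bfSeq S m := by
  induction h with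
  | refl => exact List.suffix_refl _
  | step _ ih =>
    rw [bfSeq_succ]
    exact ih.trans ((List.suffix_cons _ _).trans (List.suffix_cons _ _))

lemma fun_mem_bfSeq (a : ℕ) : (a, bfFun S a) ∈ bfSeq S (a + 1) := by
  simp [bfSeq_succ]

lemma inv_mem_bfSeq (b : ℕ) : (bfInv S b, b) ∈ bfSeq S (b + 1) := by
  simp [bfSeq_succ]

variable {S}

lemma IsBackForthSystem.sat_bfSeq (hS : IsBackForthSystem S) (k : ℕ) : S (bfSeq S k) := by
  induction k with
  | zero => exact hS.nil
  | succ k ih =>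
    have hforth : S (bfForth S k (bfSeq S k)) := Nat.sInf_mem (hS.forth _ ih k)
    exact Nat.sInf_mem (hS.back _ hforth k)

lemma IsBackForthSystem.coherent_bfSeq (hS : IsBackForthSystem S) {k m : ℕ} {q q' : ℕ × ℕ}
    (hq : q ∈ bfSeq S k) (hq' : q' ∈ bfSeq S m) : q.1 = q'.1 ↔ q.2 = q'.2 :=
  hS.coherent _ (hS.sat_bfSeq (max k m)) q ((bfSeq_suffix S (le_max_left k m)).subset hq)
    q' ((bfSeq_suffix S (le_max_right k m)).subset hq')

noncomputable def IsBackForthSystem.equiv (hS : IsBackForthSystem S) : ℕ ≃ ℕ where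
  toFun := bfFun S
  invFun := bfInv S
  left_inv a := ((hS.coherent_bfSeq (inv_mem_bfSeq S _) (fun_mem_bfSeq S a)).2 rfl)
  right_inv b := ((hS.coherent_bfSeq (fun_mem_bfSeq S _) (inv_mem_bfSeq S b)).1 rfl)

lemma IsBackForthSystem.exists_bfSeq {n : ℕ} (hS : IsBackForthSystem S) (v : Fin n → ℕ) :
    ∃ k, ∀ j, (v j, hS.equiv (v j)) ∈ bfSeq S k :=
  ⟨Finset.univ.sup v + 1, fun j => (bfSeq_suffix S (Nat.succ_le_succ
    (Finset.le_sup (Finset.mem_univ j)))).subset (fun_mem_bfSeq S (v j))⟩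

end BackForth

lemma measurable_sInf_setOf {X : Type*} [MeasurableSpace X] {P : X → ℕ → Prop}
    (hP : ∀ n, Measurable fun x => P x n) : Measurable fun x => sInf {n | P x n} := by
  refine measurable_to_countable' fun k => ?_
  have : (fun x => sInf {n | P x n}) ⁻¹' {k} =
      {x | (P x k ∧ ∀ m < k, ¬ P x m) ∨ (k = 0 ∧ ∀ m, ¬ P x m)} := by
    ext x
    simp only [Set.mem_preimage, Set.mem_singleton_iff, Set.mem_ofPred_eq]
    constructor
    · rintro rfl
      by_cases hne : ∃ n, P x n
      · exact .inl ⟨Nat.sInf_mem hne, fun m hm => Nat.notMem_of_lt_sInf hm⟩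
      · have hnone : ∀ m, ¬ P x m := fun m hm => hne ⟨m, hm⟩
        exact .inr ⟨by simp [hnone], hnone⟩
    · rintro (⟨hk, hmin⟩ | ⟨rfl, hnone⟩)
      · exact le_antisymm (Nat.sInf_le hk) (not_lt.1 fun hlt => hmin _ hlt (Nat.sInf_mem ⟨k, hk⟩))
      · simp [hnone]
  rw [this]
  exact measurableSet_setOfPred.2 (by fun_prop)

section MeasurableBackForth

local instance : MeasurableSpace (List (ℕ × ℕ)) := ⊤

local instance : DiscreteMeasurableSpace (List (ℕ × ℕ)) := ⟨fun _ => trivial⟩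

variable {X : Type*} [MeasurableSpace X] {P : X → List (ℕ × ℕ) → Prop}

lemma measurable_sInf_cons (hP : ∀ p, Measurable fun x => P x p) {f : X → List (ℕ × ℕ)}
    (hf : Measurable f) (g : ℕ → ℕ × ℕ) : Measurable fun x => sInf {n | P x (g n :: f x)} := by
  have : Measurable fun z : X × List (ℕ × ℕ) => sInf {n | P z.1 (g n :: z.2)} :=
    measurable_from_prod_countable_left fun p => measurable_sInf_setOf fun n => hP (g n :: p)
  exact this.comp (measurable_id.prodMk hf)

lemma measurable_bfForth (hP : ∀ p, Measurable fun x => P x p) {f : X → List (ℕ × ℕ)}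
    (hf : Measurable f) (a : ℕ) : Measurable fun x => bfForth (P x) a (f x) :=
  (measurable_of_countable fun z : ℕ × List (ℕ × ℕ) => (a, z.1) :: z.2).comp
    ((measurable_sInf_cons hP hf _).prodMk hf)

lemma measurable_bfBack (hP : ∀ p, Measurable fun x => P x p) {f : X → List (ℕ × ℕ)}
    (hf : Measurable f) (b : ℕ) : Measurable fun x => bfBack (P x) b (f x) :=
  (measurable_of_countable fun z : ℕ × List (ℕ × ℕ) => (z.1, b) :: z.2).comp
    ((measurable_sInf_cons hP hf _).prodMk hf)

lemma measurable_bfSeq (hP : ∀ p, Measurable fun x => P x p) (k : ℕ) :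
    Measurable fun x => bfSeq (P x) k := by
  induction k with
  | zero => exact measurable_const
  | succ k ih => exact measurable_bfBack hP (measurable_bfForth hP ih k) k

lemma measurable_bfFun (hP : ∀ p, Measurable fun x => P x p) :
    Measurable fun x => bfFun (P x) :=
  measurable_pi_lambda _ fun a => measurable_sInf_cons hP (measurable_bfSeq hP a) _

lemma measurable_bfInv (hP : ∀ p, Measurable fun x => P x p) :
    Measurable fun x => bfInv (P x) :=
  measurable_pi_lambda _ fun b =>
    measurable_sInf_cons hP (measurable_bfForth hP (measurable_bfSeq hP b) b) _

end MeasurableBackForth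

section ScottAnalysis

open scoped Ordinal

variable {L : ℕ → ℕ}

def IsPartialIso (C : Str L) (x : ObjCode L) (p : List (ℕ × ℕ)) : Prop :=
  (∀ q ∈ p, ∀ q' ∈ p, q.1 = q'.1 ↔ q.2 = q'.2) ∧
  ∀ i (v : Fin (L i) → ℕ × ℕ), (∀ k, v k ∈ p) →
    x ⟨i, fun k => (v k).1⟩ = C.rel i fun k => (v k).2

noncomputable def BackForth (C : Str L) : Ordinal.{0} → ObjCode L → List (ℕ × ℕ) → Prop :=
  Ordinal.lt_wf.fix fun α rec x p =>
    IsPartialIso C x p ∧ ∀ β (h : β < α),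
      (∀ a, ∃ b, rec β h x ((a, b) :: p)) ∧ (∀ b, ∃ a, rec β h x ((a, b) :: p))

variable {C : Str L} {α β : Ordinal.{0}} {x : ObjCode L} {p : List (ℕ × ℕ)}

lemma backForth_iff : BackForth C α x p ↔ IsPartialIso C x p ∧ ∀ β < α,
    (∀ a, ∃ b, BackForth C β x ((a, b) :: p)) ∧ (∀ b, ∃ a, BackForth C β x ((a, b) :: p)) := by
  rw [BackForth, WellFounded.fix_eq]

lemma BackForth.isPartialIso (h : BackForth C α x p) : IsPartialIso C x p :=
  (backForth_iff.1 h).1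

lemma BackForth.anti (hβ : β ≤ α) (h : BackForth C α x p) : BackForth C β x p := by
  rw [backForth_iff] at h ⊢
  exact ⟨h.1, fun γ hγ => h.2 γ (hγ.trans_le hβ)⟩

lemma backForth_of_subset_graph {M : Str L} {g : ℕ ≃ ℕ} (hg : IsIso M C g) (α : Ordinal.{0}) :
    ∀ p : List (ℕ × ℕ), (∀ q ∈ p, q.2 = g q.1) → BackForth C α (codeStr M) p := by
  induction α using WellFoundedLT.induction with
  | _ α ih =>
    intro p hp
    have hcons : ∀ a, ∀ q ∈ (a, g a) :: p, q.2 = g q.1 := by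
      simpa using hp
    refine backForth_iff.2 ⟨⟨fun q hq q' hq' => ?_, fun i v hv => ?_⟩, fun β hβ => ⟨?_, ?_⟩⟩
    · rw [hp q hq, hp q' hq', g.apply_eq_iff_eq]
    · rw [show (fun k => (v k).2) = fun k => g (v k).1 from funext fun k => hp _ (hv k)]
      exact hg i _
    · exact fun a => ⟨g a, ih β hβ _ (hcons a)⟩
    · exact fun b => ⟨g.symm b, ih β hβ _ (by simpa using hcons (g.symm b))⟩

lemma IsPartialIso.map {M N : Str L} {g : ℕ ≃ ℕ} (hg : IsIso M N g)
    (h : IsPartialIso C (codeStr M) p) : IsPartialIso C (codeStr N) (p.map (Prod.map g id)) := by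
  refine ⟨?_, fun i v hv => ?_⟩
  · simp only [List.mem_map, forall_exists_index, and_imp, forall_apply_eq_imp_iff₂,
      Prod.map_fst, Prod.map_snd, id, g.apply_eq_iff_eq]
    exact h.1
  · choose r hr hrv using fun k => List.mem_map.1 (hv k)
    calc codeStr N ⟨i, fun k => (v k).1⟩ = N.rel i fun k => g (r k).1 := by
          simp only [codeStr, ← hrv, Prod.map_fst]
      _ = C.rel i fun k => (r k).2 := ((hg i _).symm.trans (h.2 i r hr))
      _ = C.rel i fun k => (v k).2 := by simp only [← hrv, Prod.map_snd, id]

lemma BackForth.map {M N : Str L} {g : ℕ ≃ ℕ} (hg : IsIso M N g) :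
    ∀ {p}, BackForth C α (codeStr M) p → BackForth C α (codeStr N) (p.map (Prod.map g id)) := by
  induction α using WellFoundedLT.induction with
  | _ α ih =>
    intro p h
    rw [backForth_iff] at h ⊢
    refine ⟨h.1.map hg, fun β hβ => ⟨fun a => ?_, fun b => ?_⟩⟩
    · obtain ⟨b, hb⟩ := (h.2 β hβ).1 (g.symm a)
      exact ⟨b, by simpa using ih β hβ hb⟩
    · obtain ⟨a, ha⟩ := (h.2 β hβ).2 b
      exact ⟨g a, by simpa using ih β hβ ha⟩

lemma backForth_map_iff {M N : Str L} {g : ℕ ≃ ℕ} (hg : IsIso M N g) :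
    BackForth C α (codeStr N) (p.map (Prod.map g id)) ↔ BackForth C α (codeStr M) p :=
  ⟨fun h => by simpa [Prod.map_comp_map] using h.map (isIso_symm hg), BackForth.map hg⟩

/-- A finite partial map that ever fails the back-and-forth test fails it below `ω₁`; the
supremum of these countably many failure levels is a stable level. -/
theorem exists_backForth_stable (C : Str L) : ∃ α₀ < ω₁,
    ∀ p, BackForth C α₀ (codeStr C) p → BackForth C (α₀ + 1) (codeStr C) p := by
  have hwit : ∀ p : List (ℕ × ℕ), ∃ δ < ω₁,
      (∃ α < ω₁, ¬ BackForth C α (codeStr C) p) → ¬ BackForth C δ (codeStr C) p := by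
    intro p
    by_cases hp : ∃ α < ω₁, ¬ BackForth C α (codeStr C) p
    · obtain ⟨α, hα, hfail⟩ := hp
      exact ⟨α, hα, fun _ => hfail⟩
    · exact ⟨0, Ordinal.omega_pos 1, fun h => absurd h hp⟩
  choose δ hδ hfail using hwit
  refine ⟨⨆ p, δ p, Ordinal.iSup_lt_omega_one hδ, fun p hp => by_contra fun hnot => ?_⟩
  have hsucc : (⨆ p, δ p) + 1 < ω₁ :=
    (Cardinal.isSuccLimit_omega 1).succ_lt (Ordinal.iSup_lt_omega_one hδ)
  exact hfail p ⟨_, hsucc, hnot⟩ (hp.anti (Ordinal.le_iSup δ p))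

lemma countable_Iio_of_lt_omega_one {α : Ordinal.{0}} (h : α < ω₁) :
    Countable (Set.Iio α) := by
  rw [← Cardinal.mk_le_aleph0_iff, Cardinal.mk_Iio_ordinal, ← Cardinal.lift_aleph0.{1, 0},
    Cardinal.lift_le]
  exact Cardinal.lt_aleph_one_iff.1 (Cardinal.lt_omega_iff_card_lt.1 h)

lemma measurable_isPartialIso (C : Str L) (p : List (ℕ × ℕ)) :
    Measurable fun x : ObjCode L => IsPartialIso C x p := by
  unfold IsPartialIso
  fun_prop

lemma measurable_backForth (C : Str L) (hα : α < ω₁) (p : List (ℕ × ℕ)) :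
    Measurable fun x => BackForth C α x p := by
  induction α using WellFoundedLT.induction generalizing p with
  | _ α ih =>
    have : Countable (Set.Iio α) := countable_Iio_of_lt_omega_one hα
    have hβ : ∀ β : Set.Iio α, ∀ q, Measurable fun x => BackForth C β x q :=
      fun β q => ih β β.2 (β.2.trans hα) q
    have hunfold : (fun x => BackForth C α x p) = fun x => IsPartialIso C x p ∧
        ∀ β : Set.Iio α, (∀ a, ∃ b, BackForth C β x ((a, b) :: p)) ∧
          (∀ b, ∃ a, BackForth C β x ((a, b) :: p)) := by
      ext x
      rw [backForth_iff, Subtype.forall]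
      rfl
    rw [hunfold]
    have hpi := measurable_isPartialIso C p
    fun_prop

lemma isBackForthSystem_backForth {M : Str L} {g : ℕ ≃ ℕ} (hg : IsIso M C g) {α₀ : Ordinal.{0}}
    (hstab : ∀ p, BackForth C α₀ (codeStr C) p → BackForth C (α₀ + 1) (codeStr C) p) :
    IsBackForthSystem (BackForth C α₀ (codeStr M)) where
  nil := backForth_of_subset_graph hg α₀ [] (by simp)
  forth p hp a := by
    have hC := backForth_iff.1 (hstab _ ((backForth_map_iff hg).2 hp))
    obtain ⟨b, hb⟩ := (hC.2 α₀ (Order.lt_add_one_iff.2 le_rfl)).1 (g a)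
    exact ⟨b, (backForth_map_iff hg).1 (by simpa using hb)⟩
  back p hp b := by
    have hC := backForth_iff.1 (hstab _ ((backForth_map_iff hg).2 hp))
    obtain ⟨a, ha⟩ := (hC.2 α₀ (Order.lt_add_one_iff.2 le_rfl)).2 b
    exact ⟨g.symm a, (backForth_map_iff hg).1 (by simpa using ha)⟩
  coherent _ hp := hp.isPartialIso.1

lemma IsBackForthSystem.isIso_equiv {M : Str L} {S : List (ℕ × ℕ) → Prop}
    (hS : IsBackForthSystem S) (hpi : ∀ p, S p → IsPartialIso C (codeStr M) p) :
    IsIso M C hS.equiv := fun i v => by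
  obtain ⟨k, hk⟩ := hS.exists_bfSeq v
  exact (hpi _ (hS.sat_bfSeq k)).2 i (fun j => (v j, hS.equiv (v j))) hk

theorem exists_measurable_iso_selector (C : Str L) :
    ∃ u v : ObjCode L → ℕ → ℕ, Measurable u ∧ Measurable v ∧ ∀ M : Str L, Isomorphic M C →
      ∃ e : ℕ ≃ ℕ, IsIso M C e ∧ ⇑e = u (codeStr M) ∧ ⇑e.symm = v (codeStr M) := by
  obtain ⟨α₀, hα₀, hstab⟩ := exists_backForth_stable C
  have hmeas := measurable_backForth C hα₀
  refine ⟨fun x => bfFun (BackForth C α₀ x), fun x => bfInv (BackForth C α₀ x),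
    measurable_bfFun hmeas, measurable_bfInv hmeas, ?_⟩
  rintro M ⟨g, hg⟩
  have hS := isBackForthSystem_backForth hg hstab
  exact ⟨hS.equiv, hS.isIso_equiv fun _ hp => hp.isPartialIso, rfl, rfl⟩

end ScottAnalysis

theorem exists_measurable_extend_and_inverse {X Y : Type*} [MeasurableSpace X]
    [StandardBorelSpace X] [MeasurableSpace Y] [MeasurableSpace.CountablySeparated Y]
    [Nonempty X] [Nonempty Y] {s : Set X} (hs : MeasurableSet s) {f : s → Y}
    (hf : Measurable f) (hinj : Function.Injective f) :
    ∃ (F : X → Y) (G : Y → X), Measurable F ∧ Measurable G ∧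
      (∀ x : s, F x = f x) ∧ ∀ x : s, G (f x) = x := by
  have : StandardBorelSpace s := hs.standardBorel
  obtain ⟨F, hFm, hF⟩ := (MeasurableEmbedding.subtype_coe hs).exists_measurable_extend hf
    fun _ => inferInstance
  obtain ⟨G, hGm, hG⟩ := (hf.measurableEmbedding hinj).exists_measurable_extend
    measurable_subtype_coe fun _ => inferInstance
  exact ⟨F, G, hFm, hGm, congrFun hF, congrFun hG⟩

section AutCode

variable {LB LA : ℕ → ℕ}

def autSet (B : Str LB) : Set (ℕ → ℕ) :=
  {f | Function.Bijective f ∧ ∀ i v, B.rel i v = B.rel i fun k => f (v k)}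

lemma measurableSet_autSet (B : Str LB) : MeasurableSet (autSet B) := by
  have := fun i => measurable_of_countable (B.rel i)
  simp only [autSet, Function.Bijective, Function.Injective, Function.Surjective]
  exact measurableSet_setOfPred.2 (by fun_prop)

noncomputable def autOfMem {B : Str LB} (f : autSet B) : aut B :=
  ⟨Equiv.ofBijective f.1 f.2.1, f.2.2⟩

lemma continuous_autOfMem (B : Str LB) : Continuous (autOfMem (B := B)) :=
  continuous_induced_rng.2 (continuous_induced_rng.2 continuous_subtype_val)

lemma coe_mem_autSet {B : Str LB} (g : aut B) : ⇑(g : Equiv.Perm ℕ) ∈ autSet B :=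
  ⟨(g : Equiv.Perm ℕ).bijective, g.2⟩

lemma autOfMem_coe {B : Str LB} (g : aut B) : autOfMem ⟨_, coe_mem_autSet g⟩ = g :=
  Subtype.ext (Equiv.ext fun _ => rfl)

def HasBorelCode {B : Str LB} {A : Str LA} (φ : aut B → aut A) : Prop :=
  ∃ Φ : (ℕ → ℕ) → (ℕ → ℕ), Measurable Φ ∧ ∀ g : aut B, Φ ⇑(g : Equiv.Perm ℕ) = ⇑(φ g : Equiv.Perm ℕ)

theorem hasBorelCode_of_continuous {B : Str LB} {A : Str LA} (H : aut B ≃* aut A)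
    (hcont : Continuous fun g : aut B => ⇑(H g : Equiv.Perm ℕ)) :
    HasBorelCode H ∧ HasBorelCode H.symm := by
  have hφ : Function.Injective fun f : autSet B => ⇑(H (autOfMem f) : Equiv.Perm ℕ) := by
    intro f f' h
    have := H.injective (Subtype.ext (Equiv.coe_fn_injective h))
    exact Subtype.ext (congrArg (fun g : aut B => ⇑(g : Equiv.Perm ℕ)) this)
  obtain ⟨F, G, hF, hG, hFφ, hGφ⟩ := exists_measurable_extend_and_inverse
    (measurableSet_autSet B) (hcont.comp (continuous_autOfMem B)).measurable hφ
  refine ⟨⟨F, hF, fun g => ?_⟩, ⟨G, hG, fun g => ?_⟩⟩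
  · simpa [autOfMem_coe] using hFφ ⟨_, coe_mem_autSet g⟩
  · simpa [autOfMem_coe] using hGφ ⟨_, coe_mem_autSet (H.symm g)⟩

end AutCode

lemma measurable_comp_fun {X : Type*} [MeasurableSpace X] {f g : X → ℕ → ℕ}
    (hf : Measurable f) (hg : Measurable g) : Measurable fun x => f x ∘ g x := by
  have heval : Measurable fun z : X × ℕ => f z.1 z.2 :=
    measurable_from_prod_countable_left fun k => (measurable_pi_apply k).comp hf
  exact measurable_pi_lambda _ fun n =>
    heval.comp (measurable_id.prodMk ((measurable_pi_apply n).comp hg))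

structure BorelIsoFamily {L : ℕ → ℕ} (C : Str L) where
  iso : Copy C → Equiv.Perm ℕ
  isIso : ∀ M : Copy C, IsIso C M.1 (iso M)
  iso_self : iso (selfCopy C) = 1
  code : ObjCode L → ℕ → ℕ
  codeInv : ObjCode L → ℕ → ℕ
  measurable_code : Measurable code
  measurable_codeInv : Measurable codeInv
  code_spec : ∀ M : Copy C, code (codeStr M.1) = ⇑(iso M)
  codeInv_spec : ∀ M : Copy C, codeInv (codeStr M.1) = ⇑(iso M)⁻¹

namespace BorelIsoFamily

variable {LB LA : ℕ → ℕ} {B : Str LB} {A : Str LA}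

theorem nonempty {L : ℕ → ℕ} (C : Str L) : Nonempty (BorelIsoFamily C) := by
  obtain ⟨u, v, hu, hv, hsel⟩ := exists_measurable_iso_selector C
  choose e he hue hve using fun M : Copy C => hsel M.1 M.2
  let e₀ := e (selfCopy C)
  exact ⟨{
    iso := fun M => (e M)⁻¹ * e₀
    isIso := fun M => isIso_trans (he (selfCopy C)) (isIso_symm (he M))
    iso_self := inv_mul_cancel e₀
    code := fun x n => v x (e₀ n)
    codeInv := fun x n => e₀.symm (u x n)
    measurable_code := measurable_pi_lambda _ fun n => (measurable_pi_apply (e₀ n)).comp hv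
    measurable_codeInv := measurable_pi_lambda _ fun n =>
      (measurable_of_countable e₀.symm).comp ((measurable_pi_apply n).comp hu)
    code_spec := fun M => by ext n; simp [← hve]
    codeInv_spec := fun M => by ext n; simp [← hue] }⟩

variable (ρ : BorelIsoFamily B)

def conj (M N : Copy B) (g : ℕ ≃ ℕ) (hg : IsIso M.1 N.1 g) : aut B :=
  ⟨(ρ.iso N)⁻¹ * g * ρ.iso M, isIso_trans (ρ.isIso M) (isIso_trans hg (isIso_symm (ρ.isIso N)))⟩

lemma coe_conj (M N : Copy B) (g : ℕ ≃ ℕ) (hg : IsIso M.1 N.1 g) :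
    (ρ.conj M N g hg : Equiv.Perm ℕ) = (ρ.iso N)⁻¹ * g * ρ.iso M := rfl

lemma conj_self (g : ℕ ≃ ℕ) (hg : IsIso B B g) : ρ.conj (selfCopy B) (selfCopy B) g hg = ⟨g, hg⟩ :=
  Subtype.ext <| show (ρ.iso _)⁻¹ * g * ρ.iso _ = g by rw [ρ.iso_self, inv_one, one_mul, mul_one]

lemma conj_trans (M N P : Copy B) (g₁ : ℕ ≃ ℕ) (h₁ : IsIso M.1 N.1 g₁) (g₂ : ℕ ≃ ℕ)
    (h₂ : IsIso N.1 P.1 g₂) (h₃ : IsIso M.1 P.1 (g₁.trans g₂)) :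
    ρ.conj M P (g₁.trans g₂) h₃ = ρ.conj N P g₂ h₂ * ρ.conj M N g₁ h₁ :=
  Subtype.ext <| show (ρ.iso P)⁻¹ * (g₂ * g₁) * ρ.iso M =
    (ρ.iso P)⁻¹ * g₂ * ρ.iso N * ((ρ.iso N)⁻¹ * g₁ * ρ.iso M) by group

lemma conj_refl (M : Copy B) (h : IsIso M.1 M.1 (Equiv.refl ℕ)) :
    ρ.conj M M (Equiv.refl ℕ) h = 1 :=
  Subtype.ext <| show (ρ.iso M)⁻¹ * 1 * ρ.iso M = 1 by group

def functor (φ : aut B →* aut A) : IsoFunctor B A where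
  obj _ := selfCopy A
  map M N g hg := φ (ρ.conj M N g hg)
  map_iso M N g hg := (φ (ρ.conj M N g hg)).2
  map_id M h := by rw [ρ.conj_refl M h, map_one]; rfl
  map_comp M N P g₁ h₁ g₂ h₂ h₃ := by rw [ρ.conj_trans M N P g₁ h₁ g₂ h₂ h₃, map_mul]; rfl

lemma functor_obj (φ : aut B →* aut A) (M : Copy B) : (ρ.functor φ).obj M = selfCopy A := rfl

lemma functor_map_self (φ : aut B →* aut A) (g : ℕ ≃ ℕ) (hg : IsIso B B g) :
    (ρ.functor φ).map (selfCopy B) (selfCopy B) g hg = φ ⟨g, hg⟩ := by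
  simp only [functor, conj_self]

lemma functor_map_functor_map (σ : BorelIsoFamily A) (φ : aut B →* aut A) (ψ : aut A →* aut B)
    (M N : Copy B) (g : ℕ ≃ ℕ) (hg : IsIso M.1 N.1 g) (h) :
    (σ.functor ψ).map ((ρ.functor φ).obj M) ((ρ.functor φ).obj N) ((ρ.functor φ).map M N g hg) h =
      ψ (φ (ρ.conj M N g hg)) :=
  σ.functor_map_self ψ _ _

lemma functor_map_inv_iso (φ : aut B →* aut A) (M : Copy B) (h : IsIso M.1 B (ρ.iso M)⁻¹) :
    (ρ.functor φ).map M (selfCopy B) (ρ.iso M)⁻¹ h = 1 := by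
  have : ρ.conj M (selfCopy B) (ρ.iso M)⁻¹ h = 1 :=
    Subtype.ext <| show (ρ.iso (selfCopy B))⁻¹ * (ρ.iso M)⁻¹ * ρ.iso M = 1 by
      rw [ρ.iso_self]; group
  simp only [functor, this, map_one, OneMemClass.coe_one]

lemma isBorelFunctor_functor {φ : aut B →* aut A} (hφ : HasBorelCode φ) :
    IsBorelFunctor (ρ.functor φ) := by
  obtain ⟨Φ, hΦ, hΦφ⟩ := hφ
  refine ⟨fun _ => codeStr A, fun t => Φ (ρ.codeInv t.2.2 ∘ t.2.1 ∘ ρ.code t.1),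
    measurable_const, ?_, fun _ => rfl, fun M N g hg => ?_⟩
  · exact hΦ.comp (measurable_comp_fun (ρ.measurable_codeInv.comp (measurable_snd.comp
      measurable_snd)) (measurable_comp_fun (measurable_fst.comp measurable_snd)
        (ρ.measurable_code.comp measurable_fst)))
  · simp only [functor, ← hΦφ, coe_conj, Equiv.Perm.coe_mul, ρ.code_spec, ρ.codeInv_spec,
      Function.comp_assoc]

def adjEquiv (σ : BorelIsoFamily A) (H : aut B ≃* aut A) : AdjEquiv B A where
  F := ρ.functor H.toMonoidHom
  G := σ.functor H.symm.toMonoidHom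
  η M := (ρ.iso M)⁻¹
  ε N := (σ.iso N)⁻¹
  η_iso M := isIso_symm (ρ.isIso M)
  ε_iso N := isIso_symm (σ.isIso N)
  η_nat M M' g hg := by
    rw [functor_map_functor_map]
    show ((H.symm (H (ρ.conj M M' g hg)) : Equiv.Perm ℕ)) * (ρ.iso M)⁻¹ = (ρ.iso M')⁻¹ * g
    rw [H.symm_apply_apply, coe_conj]
    group
  ε_nat N N' g hg := by
    rw [functor_map_functor_map]
    show ((H (H.symm (σ.conj N N' g hg)) : Equiv.Perm ℕ)) * (σ.iso N)⁻¹ = (σ.iso N')⁻¹ * g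
    rw [H.apply_symm_apply, coe_conj]
    group
  triangleF M := (ρ.functor_map_inv_iso _ M _).trans (by rw [functor_obj, σ.iso_self, inv_one])
  triangleG N := (σ.functor_map_inv_iso _ N _).trans (by rw [functor_obj, ρ.iso_self, inv_one])

lemma isBorelAdjEquiv_adjEquiv (σ : BorelIsoFamily A) {H : aut B ≃* aut A}
    (hH : HasBorelCode H) (hH' : HasBorelCode H.symm) : IsBorelAdjEquiv (ρ.adjEquiv σ H) :=
  ⟨ρ.isBorelFunctor_functor hH, σ.isBorelFunctor_functor hH',
    ⟨ρ.codeInv, ρ.measurable_codeInv, ρ.codeInv_spec⟩,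
    ⟨σ.codeInv, σ.measurable_codeInv, σ.codeInv_spec⟩⟩

end BorelIsoFamily

/-- **Theorem 2.5.**  For every continuous group isomorphism `H : Aut(B) → Aut(A)`,
there is a Borel adjoint equivalence of categories `(F, G, η, ε)` between `Iso(B)`
and `Iso(A)` with `F(B) = A` whose restriction to `Aut(B)` is `H`. -/
theorem iso_to_adj_equiv (LA LB : ℕ → ℕ) (A : Str LA) (B : Str LB)
    (H : ↥(aut B) ≃* ↥(aut A))
    (hcont : Continuous fun g : ↥(aut B) => ((H g : Equiv.Perm ℕ) : ℕ → ℕ)) :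
    ∃ E : AdjEquiv B A, IsBorelAdjEquiv E ∧ (E.F.obj (selfCopy B)).1 = A ∧
      ∀ g : ↥(aut B),
        E.F.map (selfCopy B) (selfCopy B) (g : Equiv.Perm ℕ) (mem_aut g.2) =
          (H g : Equiv.Perm ℕ) := by
  obtain ⟨ρ⟩ := BorelIsoFamily.nonempty B
  obtain ⟨σ⟩ := BorelIsoFamily.nonempty A
  obtain ⟨hH, hH'⟩ := hasBorelCode_of_continuous H hcont
  exact ⟨ρ.adjEquiv σ H, ρ.isBorelAdjEquiv_adjEquiv σ hH hH', rfl,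
    fun g => ρ.functor_map_self _ _ _⟩

end Paper
end

section
/- Let A and B be countable structures, let F : Iso(B) → Iso(A) be a Borel functor with A = F(B), and define Dom ⊆ B* × ω by: (b̄,i) ∈ Dom iff (b̄,b̄) ⊩_{(B*)²} "F(ġ₂⁻¹∘ġ₁)(i) = i", and for (b̄,i),(c̄,j) ∈ Dom define (b̄,i) ∼ (c̄,j) iff (b̄,c̄) ⊩_{(B*)²} "F(ġ₂⁻¹∘ġ₁)(i) = j". Then ∼ is an equivalence relation on Dom. -/
namespace Paper

/-- The pullback `B_g` of `B` along a bijection `g : ω → B`. -/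
def pullbackE {L : ℕ → ℕ} (B : Str L) (g : ℕ ≃ ℕ) : Str L :=
  ⟨fun k v => B.rel k fun t => g (v t)⟩

theorem pullback_isIso {L : ℕ → ℕ} (B : Str L) (g : ℕ ≃ ℕ) :
    IsIso (pullbackE B g) B g := fun _ _ => rfl

/-- The pullback `B_g`, as a copy of `B`. -/
def copyOf {L : ℕ → ℕ} (B : Str L) (g : ℕ ≃ ℕ) : Copy B :=
  ⟨pullbackE B g, g, pullback_isIso B g⟩

/-- `g₂⁻¹ ∘ g₁` is an isomorphism from `B_{g₁}` to `B_{g₂}`. -/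
theorem pullback_mor {L : ℕ → ℕ} (B : Str L) (g₁ g₂ : ℕ ≃ ℕ) :
    IsIso (pullbackE B g₁) (pullbackE B g₂) (g₁.trans g₂.symm) := by
  intro k v
  simp [pullbackE]

end Paper
namespace Paper

/-- A condition in the product forcing `(B*)^ℓ`: an `ℓ`-tuple of finite tuples
from the domain of `B` (injectivity is the predicate `validCond`). -/
abbrev Cond (ℓ : ℕ) := Fin ℓ → List ℕ

/-- A condition is valid if each coordinate is an injective (repetition-free) tuple. -/
def validCond {ℓ : ℕ} (p : Cond ℓ) : Prop := ∀ i, (p i).Nodup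

/-- `q` extends `p` as a condition in `(B*)^ℓ`. -/
def extendsCond {ℓ : ℕ} (q p : Cond ℓ) : Prop := ∀ i, p i <+: q i

/-- The forcing language for `(B*)^ℓ`: basic formulas `ġ_i⁻¹∘ġ_j(m) = n` and its
negation, `R^{B_{ġ_i}}(a₁,…,a_k)` and its negation, `ġ_i(m) = n` and its negation,
closed under countable conjunctions and disjunctions. -/
inductive FormL (L : ℕ → ℕ) (ℓ : ℕ) : Type where
  | compEq (i j : Fin ℓ) (m n : ℕ)
  | compNe (i j : Fin ℓ) (m n : ℕ)
  | rel (i : Fin ℓ) (k : ℕ) (a : Fin (L k) → ℕ)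
  | nrel (i : Fin ℓ) (k : ℕ) (a : Fin (L k) → ℕ)
  | appEq (i : Fin ℓ) (m n : ℕ)
  | appNe (i : Fin ℓ) (m n : ℕ)
  | conj (ψ : ℕ → FormL L ℓ)
  | disj (ψ : ℕ → FormL L ℓ)

/-- The formal negation within the forcing language: it flips conjunctions and
disjunctions and negates the basic formulas. -/
def negat {L : ℕ → ℕ} {ℓ : ℕ} : FormL L ℓ → FormL L ℓ
  | .compEq i j m n => .compNe i j m n
  | .compNe i j m n => .compEq i j m n
  | .rel i k a => .nrel i k a
  | .nrel i k a => .rel i k a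
  | .appEq i m n => .appNe i m n
  | .appNe i m n => .appEq i m n
  | .conj ψ => .disj fun n => negat (ψ n)
  | .disj ψ => .conj fun n => negat (ψ n)

/-- The forcing relation `p ⊩_{(B*)^ℓ} φ` (Definition 3.3 of the paper). -/
def Forces {L : ℕ → ℕ} (B : Str L) {ℓ : ℕ} : Cond ℓ → FormL L ℓ → Prop
  | p, .compEq i j m n => ∃ x, (p i)[n]? = some x ∧ (p j)[m]? = some x
  | p, .compNe i j m n =>
      (∃ x y, (p i)[n]? = some x ∧ (p j)[m]? = some y ∧ x ≠ y) ∨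
      (∃ m', m' ≠ m ∧ ∃ x, (p i)[n]? = some x ∧ (p j)[m']? = some x) ∨
      (∃ n', n' ≠ n ∧ ∃ x, (p i)[n']? = some x ∧ (p j)[m]? = some x)
  | p, .rel i k a =>
      ∃ v : Fin (L k) → ℕ, (∀ t, (p i)[a t]? = some (v t)) ∧ B.rel k v = true
  | p, .nrel i k a =>
      ∃ v : Fin (L k) → ℕ, (∀ t, (p i)[a t]? = some (v t)) ∧ B.rel k v = false
  | p, .appEq i m n => (p i)[m]? = some n
  | p, .appNe i m n =>
      (∃ x, (p i)[m]? = some x ∧ x ≠ n) ∨ (∃ m', m' ≠ m ∧ (p i)[m']? = some n)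
  | p, .conj ψ => ∀ (n : ℕ) (q : Cond ℓ), validCond q → extendsCond q p →
      ∃ r : Cond ℓ, validCond r ∧ extendsCond r q ∧ Forces B r (ψ n)
  | p, .disj ψ => ∃ n : ℕ, Forces B p (ψ n)

end Paper
namespace Paper

/-- `φ[g]` holds: the truth of a sentence of the forcing language under the natural
interpretation which substitutes `g i` for `ġ_i` (so `ġ_i⁻¹∘ġ_j(m) = n` becomes
`g_i(n) = g_j(m)`, and `R^{B_{ġ_i}}(ā)` is read in the pullback `B_{g_i}`). -/
def Holds {L : ℕ → ℕ} (B : Str L) {ℓ : ℕ} (g : Fin ℓ → ℕ → ℕ) : FormL L ℓ → Prop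
  | .compEq i j m n => g i n = g j m
  | .compNe i j m n => g i n ≠ g j m
  | .rel i k a => B.rel k (fun t => g i (a t)) = true
  | .nrel i k a => B.rel k (fun t => g i (a t)) = false
  | .appEq i m n => g i m = n
  | .appNe i m n => g i m ≠ n
  | .conj ψ => ∀ n : ℕ, Holds B g (ψ n)
  | .disj ψ => ∃ n : ℕ, Holds B g (ψ n)

/-- The condition `p` is contained in the tuple `g` of functions `ω → B`:
each coordinate of `p` is an initial segment of the corresponding function. -/
def containedIn {ℓ : ℕ} (p : Cond ℓ) (g : Fin ℓ → ℕ → ℕ) : Prop :=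
  ∀ (i : Fin ℓ) (k : ℕ), k < (p i).length → (p i)[k]? = some (g i k)

/-- `g` is generic for `φ`: every sentence in some fixed countable set containing `φ`
and closed under subformulas and formal negations is decided by some condition
contained in `g`. -/
def GenericFor {L : ℕ → ℕ} (B : Str L) {ℓ : ℕ} (g : Fin ℓ → ℕ → ℕ)
    (φ : FormL L ℓ) : Prop :=
  ∃ S : Set (FormL L ℓ), S.Countable ∧ φ ∈ S ∧
    (∀ ψ ∈ S, negat ψ ∈ S) ∧
    (∀ ψ : ℕ → FormL L ℓ, (FormL.conj ψ ∈ S ∨ FormL.disj ψ ∈ S) → ∀ n, ψ n ∈ S) ∧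
    (∀ ψ ∈ S, ∃ p : Cond ℓ, validCond p ∧ containedIn p g ∧
      (Forces B p ψ ∨ Forces B p (negat ψ)))

end Paper

namespace Paper

section InitialSegment

def IsInitialSegment (l : List ℕ) (f : ℕ → ℕ) : Prop :=
  ∀ k : ℕ, k < l.length → l[k]? = some (f k)

theorem getElem?_eq_some_of_prefix {l₁ l₂ : List ℕ} (h : l₁ <+: l₂) {k x : ℕ}
    (hx : l₁[k]? = some x) : l₂[k]? = some x := by
  obtain ⟨t, rfl⟩ := h
  rwa [List.getElem?_append_left (List.getElem?_eq_some_iff.mp hx).1]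

theorem eq_of_getElem?_eq_some_of_nodup {l : List ℕ} (hl : l.Nodup) {k k' x : ℕ}
    (h : l[k]? = some x) (h' : l[k']? = some x) : k = k' :=
  (List.getElem?_inj (List.getElem?_eq_some_iff.mp h).1 hl).mp (h.trans h'.symm)

namespace IsInitialSegment

variable {l u : List ℕ} {f : ℕ → ℕ}

theorem apply_eq (h : IsInitialSegment l f) {k x : ℕ} (hx : l[k]? = some x) : f k = x :=
  Option.some_injective _ ((h k (List.getElem?_eq_some_iff.mp hx).1).symm.trans hx)

theorem of_prefix (h : IsInitialSegment l f) (hu : u <+: l) : IsInitialSegment u f := by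
  intro k hk
  have hx := List.getElem?_eq_getElem hk
  rw [hx, h.apply_eq (getElem?_eq_some_of_prefix hu hx)]

theorem prefix_of_length_le (hu : IsInitialSegment u f) (hl : IsInitialSegment l f)
    (hle : u.length ≤ l.length) : u <+: l :=
  List.prefix_iff_getElem?.mpr fun k hk => by
    rw [hl k (hk.trans_le hle), hu.apply_eq (List.getElem?_eq_getElem hk)]

end IsInitialSegment

end InitialSegment

section Conditions

variable {ℓ : ℕ}

theorem extendsCond_refl (p : Cond ℓ) : extendsCond p p := fun _ => List.prefix_refl _

theorem extendsCond_trans {p q r : Cond ℓ} (hq : extendsCond q p) (hr : extendsCond r q) :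
    extendsCond r p :=
  fun i => (hq i).trans (hr i)

theorem validCond_pair {u v : List ℕ} (hu : u.Nodup) (hv : v.Nodup) : validCond ![u, v] :=
  Fin.forall_fin_two.mpr ⟨hu, hv⟩

theorem exists_common_extension {p q : Cond ℓ} {g : Fin ℓ → ℕ → ℕ} (hp : validCond p)
    (hq : validCond q) (hpg : containedIn p g) (hqg : containedIn q g) :
    ∃ r, validCond r ∧ extendsCond r p ∧ extendsCond r q := by
  refine ⟨fun i => if (p i).length ≤ (q i).length then q i else p i,
    fun i => ?_, fun i => ?_, fun i => ?_⟩ <;> dsimp only <;> split_ifs with h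
  · exact hq i
  · exact hp i
  · exact IsInitialSegment.prefix_of_length_le (hpg i) (hqg i) h
  · exact List.prefix_refl _
  · exact List.prefix_refl _
  · exact IsInitialSegment.prefix_of_length_le (hqg i) (hpg i) (by omega)

end Conditions

section Grow

def grow (l : List ℕ) (t : ℕ) : List ℕ := l ++ (List.range (t + 1)).filter (· ∉ l)

variable {l : List ℕ}

theorem prefix_grow (l : List ℕ) (t : ℕ) : l <+: grow l t := List.prefix_append _ _

theorem nodup_grow (hl : l.Nodup) (t : ℕ) : (grow l t).Nodup :=
  hl.append (List.nodup_range.filter _) fun _ hx hx' => by simp_all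

theorem mem_grow_self (l : List ℕ) (t : ℕ) : t ∈ grow l t := by
  by_cases ht : t ∈ l
  · exact List.mem_append_left _ ht
  · exact List.mem_append_right _ (by simpa using ht)

theorem lt_length_grow (l : List ℕ) (t : ℕ) : t < (grow l t).length := by
  have hsub : List.range (t + 1) ⊆ grow l t := fun s hs => by
    by_cases hsl : s ∈ l
    · exact List.mem_append_left _ hsl
    · exact List.mem_append_right _ (by simp_all)
  simpa using (List.nodup_range.subperm hsub).length_le

end Grow

section Forcing

variable {L : ℕ → ℕ} (B : Str L) {ℓ : ℕ}

def Decides (p : Cond ℓ) (φ : FormL L ℓ) : Prop :=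
  Forces B p φ ∨ Forces B p (negat φ)

theorem negat_negat (φ : FormL L ℓ) : negat (negat φ) = φ := by
  induction φ with
  | conj ψ ih => exact congrArg FormL.conj (funext ih)
  | disj ψ ih => exact congrArg FormL.disj (funext ih)
  | _ => rfl

theorem Decides.negat {p : Cond ℓ} {φ : FormL L ℓ} (h : Decides B p φ) :
    Decides B p (negat φ) := by
  rw [Decides, negat_negat]
  exact h.symm

theorem Forces.mono {p q : Cond ℓ} (hqp : extendsCond q p) {φ : FormL L ℓ}
    (hp : Forces B p φ) : Forces B q φ := by
  have e : ∀ {i k x}, (p i)[k]? = some x → (q i)[k]? = some x :=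
    getElem?_eq_some_of_prefix (hqp _)
  induction φ with
  | compEq i j m n =>
    obtain ⟨x, h₁, h₂⟩ := hp
    exact ⟨x, e h₁, e h₂⟩
  | compNe i j m n =>
    rcases hp with ⟨x, y, h₁, h₂, hxy⟩ | ⟨m', hm', x, h₁, h₂⟩ | ⟨n', hn', x, h₁, h₂⟩
    exacts [Or.inl ⟨x, y, e h₁, e h₂, hxy⟩, Or.inr (Or.inl ⟨m', hm', x, e h₁, e h₂⟩),
      Or.inr (Or.inr ⟨n', hn', x, e h₁, e h₂⟩)]
  | rel i k a | nrel i k a =>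
    obtain ⟨v, hv, hr⟩ := hp
    exact ⟨v, fun t => e (hv t), hr⟩
  | appEq i m n => exact e hp
  | appNe i m n =>
    rcases hp with ⟨x, h₁, hx⟩ | ⟨m', hm', h₁⟩
    exacts [Or.inl ⟨x, e h₁, hx⟩, Or.inr ⟨m', hm', e h₁⟩]
  | conj ψ => exact fun n r hr hrq => hp n r hr (extendsCond_trans hqp hrq)
  | disj ψ ih =>
    obtain ⟨n, hn⟩ := hp
    exact ⟨n, ih n hn⟩

theorem not_forces_compNe_of_forces_compEq {p : Cond ℓ} (hp : validCond p) {i j : Fin ℓ}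
    {m n : ℕ} (h : Forces B p (.compEq i j m n)) : ¬ Forces B p (.compNe i j m n) := by
  obtain ⟨x, hn, hm⟩ := h
  rintro (⟨y, z, hy, hz, hyz⟩ | ⟨m', hm', y, hy, hz⟩ | ⟨n', hn', y, hy, hz⟩)
  · rw [hn] at hy
    rw [hm] at hz
    cases hy
    cases hz
    exact hyz rfl
  · rw [hn] at hy
    cases hy
    exact hm' (eq_of_getElem?_eq_some_of_nodup (hp j) hz hm)
  · rw [hm] at hz
    cases hz
    exact hn' (eq_of_getElem?_eq_some_of_nodup (hp i) hy hn)

theorem not_forces_nrel_of_forces_rel {p : Cond ℓ} {i : Fin ℓ} {k : ℕ} {a : Fin (L k) → ℕ}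
    (h : Forces B p (.rel i k a)) : ¬ Forces B p (.nrel i k a) := by
  obtain ⟨v, hv, hr⟩ := h
  rintro ⟨w, hw, hr'⟩
  obtain rfl : v = w := funext fun t => Option.some_injective _ ((hv t).symm.trans (hw t))
  cases hr.symm.trans hr'

theorem not_forces_appNe_of_forces_appEq {p : Cond ℓ} (hp : validCond p) {i : Fin ℓ}
    {m n : ℕ} (h : Forces B p (.appEq i m n)) : ¬ Forces B p (.appNe i m n) := by
  rintro (⟨x, hx, hxn⟩ | ⟨m', hm', hm'n⟩)
  · rw [h] at hx
    cases hx
    exact hxn rfl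
  · exact hm' (eq_of_getElem?_eq_some_of_nodup (hp i) hm'n h)

theorem Forces.not_forces_negat {p : Cond ℓ} (hp : validCond p) {φ : FormL L ℓ}
    (h : Forces B p φ) : ¬ Forces B p (negat φ) := by
  induction φ generalizing p with
  | compEq i j m n => exact not_forces_compNe_of_forces_compEq B hp h
  | compNe i j m n => exact fun h' => not_forces_compNe_of_forces_compEq B hp h' h
  | rel i k a => exact not_forces_nrel_of_forces_rel B h
  | nrel i k a => exact fun h' => not_forces_nrel_of_forces_rel B h' h
  | appEq i m n => exact not_forces_appNe_of_forces_appEq B hp h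
  | appNe i m n => exact fun h' => not_forces_appNe_of_forces_appEq B hp h' h
  | conj ψ ih =>
    rintro ⟨n, hn⟩
    obtain ⟨r, hr, hrp, hrψ⟩ := h n p hp (extendsCond_refl p)
    exact ih n hr hrψ (hn.mono B hrp)
  | disj ψ ih =>
    obtain ⟨n, hn⟩ := h
    intro hneg
    obtain ⟨r, hr, hrp, hrψ⟩ := hneg n p hp (extendsCond_refl p)
    exact ih n hr (hn.mono B hrp) hrψ

theorem exists_extension_defined {q : Cond ℓ} (hq : validCond q) (N : ℕ) :
    ∃ r, validCond r ∧ extendsCond r q ∧ ∀ i k, k ≤ N → ∃ x, (r i)[k]? = some x :=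
  ⟨fun i => grow (q i) N, fun i => nodup_grow (hq i) N, fun _ => prefix_grow _ _,
    fun i _ hk => ⟨_, List.getElem?_eq_getElem ((Nat.lt_succ_of_le hk).trans_le
      (lt_length_grow (q i) N))⟩⟩

theorem exists_decides_compEq {q : Cond ℓ} (hq : validCond q) (i j : Fin ℓ) (m n : ℕ) :
    ∃ r, validCond r ∧ extendsCond r q ∧ Decides B r (.compEq i j m n) := by
  obtain ⟨r, hr, hrq, hdef⟩ := exists_extension_defined hq (max m n)
  obtain ⟨x, hx⟩ := hdef i n (le_max_right m n)
  obtain ⟨y, hy⟩ := hdef j m (le_max_left m n)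
  refine ⟨r, hr, hrq, ?_⟩
  by_cases hxy : x = y
  · exact Or.inl ⟨x, hx, hxy ▸ hy⟩
  · exact Or.inr (Or.inl ⟨x, y, hx, hy, hxy⟩)

theorem exists_decides_rel {q : Cond ℓ} (hq : validCond q) (i : Fin ℓ) (k : ℕ)
    (a : Fin (L k) → ℕ) : ∃ r, validCond r ∧ extendsCond r q ∧ Decides B r (.rel i k a) := by
  obtain ⟨r, hr, hrq, hdef⟩ := exists_extension_defined hq (Finset.univ.sup a)
  choose v hv using fun t => hdef i (a t) (Finset.le_sup (Finset.mem_univ t))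
  refine ⟨r, hr, hrq, ?_⟩
  cases hB : B.rel k v
  · exact Or.inr ⟨v, hv, hB⟩
  · exact Or.inl ⟨v, hv, hB⟩

theorem exists_decides_appEq {q : Cond ℓ} (hq : validCond q) (i : Fin ℓ) (m n : ℕ) :
    ∃ r, validCond r ∧ extendsCond r q ∧ Decides B r (.appEq i m n) := by
  obtain ⟨r, hr, hrq, hdef⟩ := exists_extension_defined hq m
  obtain ⟨x, hx⟩ := hdef i m le_rfl
  refine ⟨r, hr, hrq, ?_⟩
  by_cases hxn : x = n
  · exact Or.inl (hxn ▸ hx)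
  · exact Or.inr (Or.inl ⟨x, hx, hxn⟩)

theorem exists_extension_decides (φ : FormL L ℓ) {q : Cond ℓ} (hq : validCond q) :
    ∃ r, validCond r ∧ extendsCond r q ∧ Decides B r φ := by
  induction φ generalizing q with
  | compEq i j m n => exact exists_decides_compEq B hq i j m n
  | compNe i j m n =>
    obtain ⟨r, hr, hrq, hd⟩ := exists_decides_compEq B hq i j m n
    exact ⟨r, hr, hrq, hd.negat B⟩
  | rel i k a => exact exists_decides_rel B hq i k a
  | nrel i k a =>
    obtain ⟨r, hr, hrq, hd⟩ := exists_decides_rel B hq i k a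
    exact ⟨r, hr, hrq, hd.negat B⟩
  | appEq i m n => exact exists_decides_appEq B hq i m n
  | appNe i m n =>
    obtain ⟨r, hr, hrq, hd⟩ := exists_decides_appEq B hq i m n
    exact ⟨r, hr, hrq, hd.negat B⟩
  | conj ψ ih =>
    by_cases h : Forces B q (.conj ψ)
    · exact ⟨q, hq, extendsCond_refl q, Or.inl h⟩
    rw [Forces] at h
    push Not at h
    obtain ⟨n, q', hq', hq'q, hno⟩ := h
    obtain ⟨r, hr, hrq', hd⟩ := ih n hq'
    exact ⟨r, hr, extendsCond_trans hq'q hrq', Or.inr ⟨n, hd.resolve_left (hno r hr hrq')⟩⟩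
  | disj ψ ih =>
    by_cases h : ∃ n r, validCond r ∧ extendsCond r q ∧ Forces B r (ψ n)
    · obtain ⟨n, r, hr, hrq, hrψ⟩ := h
      exact ⟨r, hr, hrq, Or.inl ⟨n, hrψ⟩⟩
    push Not at h
    refine ⟨q, hq, extendsCond_refl q, Or.inr fun n q' hq' hq'q => ?_⟩
    obtain ⟨r, hr, hrq', hd⟩ := ih n hq'
    exact ⟨r, hr, hrq', hd.resolve_left (h n r hr (extendsCond_trans hq'q hrq'))⟩

theorem forces_of_forall_not_forces_negat {φ : FormL L ℓ} (hφ : ∃ ψ, φ = .conj ψ)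
    {p : Cond ℓ} (h : ∀ q, validCond q → extendsCond q p → ¬ Forces B q (negat φ)) :
    Forces B p φ := by
  obtain ⟨ψ, rfl⟩ := hφ
  intro n q hq hqp
  obtain ⟨r, hr, hrq, hd⟩ := exists_extension_decides B (.conj ψ) hq
  have hrψ : Forces B r (.conj ψ) := hd.resolve_right (h r hr (extendsCond_trans hqp hrq))
  obtain ⟨r', hr', hr'r, hr'ψ⟩ := hrψ n r hr (extendsCond_refl r)
  exact ⟨r', hr', extendsCond_trans hrq hr'r, hr'ψ⟩

end Forcing

section Truth

variable {L : ℕ → ℕ} (B : Str L) {ℓ : ℕ}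

theorem not_holds_of_holds_negat {g : Fin ℓ → ℕ → ℕ} {φ : FormL L ℓ}
    (h : Holds B g (negat φ)) : ¬ Holds B g φ := by
  induction φ with
  | conj ψ ih =>
    obtain ⟨n, hn⟩ := h
    exact fun h' => ih n hn (h' n)
  | disj ψ ih => exact fun ⟨n, hn⟩ => ih n (h n) hn
  | _ => simp_all [negat, Holds]

section GenericFor

variable {B} {g : Fin ℓ → ℕ → ℕ}

theorem GenericFor.negat {φ : FormL L ℓ} (h : GenericFor B g φ) :
    GenericFor B g (negat φ) :=
  let ⟨S, hS, hφ, hneg, hsub, hdec⟩ := h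
  ⟨S, hS, hneg φ hφ, hneg, hsub, hdec⟩

theorem GenericFor.of_conj {ψ : ℕ → FormL L ℓ} (h : GenericFor B g (.conj ψ)) (n : ℕ) :
    GenericFor B g (ψ n) :=
  let ⟨S, hS, hφ, hneg, hsub, hdec⟩ := h
  ⟨S, hS, hsub ψ (Or.inl hφ) n, hneg, hsub, hdec⟩

theorem GenericFor.of_disj {ψ : ℕ → FormL L ℓ} (h : GenericFor B g (.disj ψ)) (n : ℕ) :
    GenericFor B g (ψ n) :=
  let ⟨S, hS, hφ, hneg, hsub, hdec⟩ := h
  ⟨S, hS, hsub ψ (Or.inr hφ) n, hneg, hsub, hdec⟩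

theorem GenericFor.exists_decides {φ : FormL L ℓ} (h : GenericFor B g φ) :
    ∃ p, validCond p ∧ containedIn p g ∧ Decides B p φ :=
  let ⟨_, _, hφ, _, _, hdec⟩ := h
  hdec φ hφ

end GenericFor

theorem containedIn.apply_eq {p : Cond ℓ} {g : Fin ℓ → ℕ → ℕ} (hpg : containedIn p g)
    {i : Fin ℓ} {k x : ℕ} (h : (p i)[k]? = some x) : g i k = x :=
  IsInitialSegment.apply_eq (hpg i) h

theorem holds_of_forces {g : Fin ℓ → ℕ → ℕ} (hinj : ∀ i, Function.Injective (g i))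
    {φ : FormL L ℓ} (hgen : GenericFor B g φ) {p : Cond ℓ} (hp : validCond p)
    (hpg : containedIn p g) (h : Forces B p φ) : Holds B g φ := by
  induction φ generalizing p with
  | compEq i j m n =>
    obtain ⟨x, hn, hm⟩ := h
    exact (hpg.apply_eq hn).trans (hpg.apply_eq hm).symm
  | compNe i j m n =>
    rcases h with ⟨x, y, hn, hm, hxy⟩ | ⟨m', hm', x, hn, hm⟩ | ⟨n', hn', x, hn, hm⟩
    · show g i n ≠ g j m
      rwa [hpg.apply_eq hn, hpg.apply_eq hm]
    · exact fun heq => hm' (hinj j ((hpg.apply_eq hm).trans ((hpg.apply_eq hn).symm.trans heq)))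
    · exact fun heq =>
        hn' (hinj i ((hpg.apply_eq hn).trans ((hpg.apply_eq hm).symm.trans heq.symm)))
  | rel i k a | nrel i k a =>
    obtain ⟨v, hv, hr⟩ := h
    show B.rel k (fun t => g i (a t)) = _
    rwa [show (fun t => g i (a t)) = v from funext fun t => hpg.apply_eq (hv t)]
  | appEq i m n => exact hpg.apply_eq h
  | appNe i m n =>
    rcases h with ⟨x, hm, hxn⟩ | ⟨m', hm', hm'n⟩
    · show g i m ≠ n
      rwa [hpg.apply_eq hm]
    · exact fun heq => hm' (hinj i ((hpg.apply_eq hm'n).trans heq.symm))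
  | conj ψ ih =>
    intro n
    -- some `q ⊆ g` decides `ψ n`, and it cannot force `¬ ψ n`, being compatible with `p`
    obtain ⟨q, hq, hqg, hd⟩ := (hgen.of_conj n).exists_decides
    refine ih n (hgen.of_conj n) hq hqg (hd.resolve_right fun hneg => ?_)
    obtain ⟨r, hr, hrp, hrq⟩ := exists_common_extension hp hq hpg hqg
    obtain ⟨r', hr', hr'r, hr'ψ⟩ := h n r hr hrp
    exact hr'ψ.not_forces_negat B hr' (hneg.mono B (extendsCond_trans hrq hr'r))
  | disj ψ ih =>
    obtain ⟨n, hn⟩ := h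
    exact ⟨n, ih n (hgen.of_disj n) hp hpg hn⟩

theorem holds_pair_of_forces {g₁ g₂ : ℕ ≃ ℕ} {φ : FormL L 2}
    (hgen : GenericFor B ![⇑g₁, ⇑g₂] φ) {p : Cond 2} (hp : validCond p)
    (h₁ : IsInitialSegment (p 0) g₁) (h₂ : IsInitialSegment (p 1) g₂) (h : Forces B p φ) :
    Holds B ![⇑g₁, ⇑g₂] φ :=
  holds_of_forces B (Fin.forall_fin_two.mpr ⟨g₁.injective, g₂.injective⟩) hgen hp
    (Fin.forall_fin_two.mpr ⟨h₁, h₂⟩) h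

/-- Enumerates the closure of `φ` under formal negation and immediate subformulas:
the code `0` negates, the code `n + 1` passes to the `n`-th conjunct or disjunct. -/
def closureEnum (φ : FormL L ℓ) : List ℕ → FormL L ℓ
  | [] => φ
  | 0 :: l => negat (closureEnum φ l)
  | (n + 1) :: l =>
    match closureEnum φ l with
    | .conj ψ | .disj ψ => ψ n
    | ψ => ψ

theorem genericFor_of_decides_closureEnum {g : Fin ℓ → ℕ → ℕ} {φ : FormL L ℓ}
    (h : ∀ l, ∃ p, validCond p ∧ containedIn p g ∧ Decides B p (closureEnum φ l)) :
    GenericFor B g φ := by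
  refine ⟨Set.range (closureEnum φ), Set.countable_range _, ⟨[], rfl⟩, ?_, ?_, ?_⟩
  · rintro _ ⟨l, rfl⟩
    exact ⟨0 :: l, rfl⟩
  · rintro ψ (⟨l, hl⟩ | ⟨l, hl⟩) n <;> exact ⟨(n + 1) :: l, by simp [closureEnum, hl]⟩
  · rintro _ ⟨l, rfl⟩
    exact h l

end Truth

section Fusion

variable {L : ℕ → ℕ} (B : Str L) {ι κ : Type*} [DecidableEq ι] (φs : κ → FormL L 2)

noncomputable def decider (φ : FormL L 2) {q : Cond 2} (hq : validCond q) : Cond 2 :=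
  (exists_extension_decides B φ hq).choose

theorem decider_spec (φ : FormL L 2) {q : Cond 2} (hq : validCond q) :
    validCond (decider B φ hq) ∧ extendsCond (decider B φ hq) q ∧
      Decides B (decider B φ hq) φ :=
  (exists_extension_decides B φ hq).choose_spec

abbrev Stage (ι : Type*) := {P : ι → List ℕ // ∀ a, (P a).Nodup}

abbrev Requirement (ι κ : Type*) := ℕ ⊕ (ι × ι × κ)

/-- The requirement `inl t` puts `t` into the domain and the range of every function;
`inr (a, b, k)` decides `φs k` along the pair `(a, b)`. -/
noncomputable def Stage.step : Requirement ι κ → Stage ι → Stage ι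
  | .inl t, P => ⟨fun a => grow (P.1 a) t, fun a => nodup_grow (P.2 a) t⟩
  | .inr (a, b, k), P =>
    ⟨fun c => if c = a then decider B (φs k) (validCond_pair (P.2 a) (P.2 b)) 0
      else if c = b then decider B (φs k) (validCond_pair (P.2 a) (P.2 b)) 1 else P.1 c,
      fun c => by
        have hr := (decider_spec B (φs k) (validCond_pair (P.2 a) (P.2 b))).1
        dsimp only
        split_ifs
        exacts [hr 0, hr 1, P.2 c]⟩

theorem Stage.prefix_step (R : Requirement ι κ) (P : Stage ι) (c : ι) :
    P.1 c <+: (Stage.step B φs R P).1 c := by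
  rcases R with t | ⟨a, b, k⟩
  · exact prefix_grow _ _
  · have hr := (decider_spec B (φs k) (validCond_pair (P.2 a) (P.2 b))).2.1
    dsimp only [Stage.step]
    split_ifs with ha hb
    · exact ha ▸ hr 0
    · exact hb ▸ hr 1
    · exact List.prefix_refl _

variable [Encodable ι] [Encodable κ]

noncomputable def fusionStage (P₀ : Stage ι) : ℕ → Stage ι
  | 0 => P₀
  | m + 1 =>
    match Encodable.decode (α := Requirement ι κ) m with
    | some R => Stage.step B φs R (fusionStage P₀ m)
    | none => fusionStage P₀ m

variable (P₀ : Stage ι)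

theorem fusionStage_encode_succ (R : Requirement ι κ) :
    fusionStage B φs P₀ (Encodable.encode R + 1) =
      Stage.step B φs R (fusionStage B φs P₀ (Encodable.encode R)) := by
  rw [fusionStage, Encodable.encodek]

theorem fusionStage_mono {m m' : ℕ} (h : m ≤ m') (a : ι) :
    (fusionStage B φs P₀ m).1 a <+: (fusionStage B φs P₀ m').1 a := by
  induction m', h using Nat.le_induction with
  | base => exact List.prefix_refl _
  | succ m' _ ih =>
    refine ih.trans ?_
    rw [fusionStage]
    split
    · exact Stage.prefix_step B φs _ _ a
    · exact List.prefix_refl _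

theorem lt_length_fusionStage (k : ℕ) (a : ι) :
    k < ((fusionStage B φs P₀
      (Encodable.encode (.inl k : Requirement ι κ) + 1)).1 a).length := by
  rw [fusionStage_encode_succ]
  exact lt_length_grow _ k

/-- The default `0` of `getD` is never used, by `lt_length_fusionStage`. -/
noncomputable def fusionLimit (a : ι) (k : ℕ) : ℕ :=
  ((fusionStage B φs P₀ (Encodable.encode (.inl k : Requirement ι κ) + 1)).1 a).getD k 0

theorem isInitialSegment_fusionStage (m : ℕ) (a : ι) :
    IsInitialSegment ((fusionStage B φs P₀ m).1 a) (fusionLimit B φs P₀ a) := by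
  intro k hk
  set m₀ := Encodable.encode (.inl k : Requirement ι κ) + 1
  have hk₀ := lt_length_fusionStage B φs P₀ k a
  have h₀ : ((fusionStage B φs P₀ m₀).1 a)[k]? = some (fusionLimit B φs P₀ a k) := by
    rw [List.getElem?_eq_getElem hk₀, fusionLimit, List.getD_eq_getElem _ _ hk₀]
  have hx := List.getElem?_eq_getElem hk
  rw [hx, ← getElem?_eq_some_of_prefix (fusionStage_mono B φs P₀ (le_max_left m m₀) a) hx,
    getElem?_eq_some_of_prefix (fusionStage_mono B φs P₀ (le_max_right m m₀) a) h₀]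

theorem fusionLimit_injective (a : ι) : Function.Injective (fusionLimit B φs P₀ a) := by
  intro k k' h
  set m₀ := fun k => Encodable.encode (.inl k : Requirement ι κ) + 1
  set m := max (m₀ k) (m₀ k')
  have hseg := isInitialSegment_fusionStage B φs P₀ m a
  have hk := (lt_length_fusionStage B φs P₀ k a).trans_le
    (fusionStage_mono B φs P₀ (le_max_left (m₀ k) (m₀ k')) a).length_le
  have hk' := (lt_length_fusionStage B φs P₀ k' a).trans_le
    (fusionStage_mono B φs P₀ (le_max_right (m₀ k) (m₀ k')) a).length_le
  exact eq_of_getElem?_eq_some_of_nodup ((fusionStage B φs P₀ m).2 a) (hseg k hk)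
    (h ▸ hseg k' hk')

theorem fusionLimit_surjective (a : ι) : Function.Surjective (fusionLimit B φs P₀ a) := by
  intro t
  have ht :
      t ∈ (fusionStage B φs P₀ (Encodable.encode (.inl t : Requirement ι κ) + 1)).1 a := by
    rw [fusionStage_encode_succ]
    exact mem_grow_self _ t
  obtain ⟨k, hk⟩ := List.mem_iff_getElem?.mp ht
  exact ⟨k, (isInitialSegment_fusionStage B φs P₀ _ a).apply_eq hk⟩

theorem exists_decides_fusionLimit {a b : ι} (hab : a ≠ b) (k : κ) :
    ∃ p, validCond p ∧ containedIn p ![fusionLimit B φs P₀ a, fusionLimit B φs P₀ b] ∧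
      Decides B p (φs k) := by
  set R : Requirement ι κ := .inr (a, b, k)
  set P := fusionStage B φs P₀ (Encodable.encode R)
  obtain ⟨hr, -, hd⟩ := decider_spec B (φs k) (validCond_pair (P.2 a) (P.2 b))
  have hseg := isInitialSegment_fusionStage B φs P₀ (Encodable.encode R + 1)
  rw [fusionStage_encode_succ] at hseg
  have h₀ := hseg a
  have h₁ := hseg b
  simp only [Stage.step, R, if_pos, if_neg hab.symm] at h₀ h₁
  exact ⟨_, hr, Fin.forall_fin_two.mpr ⟨h₀, h₁⟩, hd⟩

theorem exists_equivs_decides (l : ι → List ℕ) (hl : ∀ a, (l a).Nodup) :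
    ∃ f : ι → ℕ ≃ ℕ, (∀ a, IsInitialSegment (l a) (f a)) ∧
      ∀ a b, a ≠ b → ∀ k, ∃ p, validCond p ∧ containedIn p ![⇑(f a), ⇑(f b)] ∧
        Decides B p (φs k) :=
  ⟨fun a => .ofBijective _ ⟨fusionLimit_injective B φs ⟨l, hl⟩ a,
      fusionLimit_surjective B φs ⟨l, hl⟩ a⟩,
    isInitialSegment_fusionStage B φs ⟨l, hl⟩ 0,
    fun _ _ hab => exists_decides_fusionLimit B φs ⟨l, hl⟩ hab⟩

end Fusion

theorem exists_pairwise_genericFor_equivs {L : ℕ → ℕ} (B : Str L) {ι : Type*} [DecidableEq ι]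
    [Encodable ι] (φ : FormL L 2) (l : ι → List ℕ) (hl : ∀ a, (l a).Nodup) :
    ∃ f : ι → ℕ ≃ ℕ, (∀ a, IsInitialSegment (l a) (f a)) ∧
      ∀ a b, a ≠ b → GenericFor B ![⇑(f a), ⇑(f b)] φ := by
  obtain ⟨f, hfl, hf⟩ := exists_equivs_decides B (closureEnum φ) l hl
  exact ⟨f, hfl, fun a b hab => genericFor_of_decides_closureEnum B (hf a b hab)⟩

namespace IsoFunctor

variable {LB LA : ℕ → ℕ} {B : Str LB} {A : Str LA} (F : IsoFunctor B A)

theorem map_congr {M N : Copy B} {g g' : ℕ ≃ ℕ} (h : g = g') (hg : IsIso M.1 N.1 g)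
    (hg' : IsIso M.1 N.1 g') : F.map M N g hg = F.map M N g' hg' := by
  subst h
  rfl

/-- `F(g₂⁻¹ ∘ g₁) : F(B_{g₁}) → F(B_{g₂})`. -/
def pullbackMap (g₁ g₂ : ℕ ≃ ℕ) : ℕ ≃ ℕ :=
  F.map (copyOf B g₁) (copyOf B g₂) (g₁.trans g₂.symm) (pullback_mor B g₁ g₂)

theorem pullbackMap_self (g : ℕ ≃ ℕ) : F.pullbackMap g g = Equiv.refl ℕ :=
  (F.map_congr (Equiv.self_trans_symm g) _ (isIso_refl _)).trans (F.map_id _ _)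

theorem pullbackMap_trans (g₁ g₂ g₃ : ℕ ≃ ℕ) :
    (F.pullbackMap g₁ g₂).trans (F.pullbackMap g₂ g₃) = F.pullbackMap g₁ g₃ := by
  have h : (g₁.trans g₂.symm).trans (g₂.trans g₃.symm) = g₁.trans g₃.symm := by
    ext
    simp
  exact (F.map_comp _ _ _ _ _ _ _ (h ▸ pullback_mor B g₁ g₃)).symm.trans
    (F.map_congr h _ _)

theorem pullbackMap_symm_apply {g₁ g₂ : ℕ ≃ ℕ} {i j : ℕ} (h : F.pullbackMap g₁ g₂ i = j) :
    F.pullbackMap g₂ g₁ j = i := by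
  rw [← h, ← Equiv.trans_apply, pullbackMap_trans, pullbackMap_self, Equiv.refl_apply]

theorem pullbackMap_trans_apply {g₁ g₂ g₃ : ℕ ≃ ℕ} {i j k : ℕ}
    (h₁₂ : F.pullbackMap g₁ g₂ i = j) (h₂₃ : F.pullbackMap g₂ g₃ j = k) :
    F.pullbackMap g₁ g₃ i = k := by
  rw [← F.pullbackMap_trans g₁ g₂ g₃, Equiv.trans_apply, h₁₂, h₂₃]

end IsoFunctor

theorem sim_is_equivalence_general (LA LB : ℕ → ℕ) (A : Str LA) (B : Str LB)
    (F : IsoFunctor B A)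
    (Θ : ℕ → ℕ → FormL LB 2)
    (hconj : ∀ i j : ℕ, ∃ ψ : ℕ → FormL LB 2, Θ i j = FormL.conj ψ)
    (hΘ : ∀ (g₁ g₂ : ℕ ≃ ℕ) (i j : ℕ),
      Holds B ![⇑g₁, ⇑g₂] (Θ i j) ↔
        F.map (copyOf B g₁) (copyOf B g₂) (g₁.trans g₂.symm)
          (pullback_mor B g₁ g₂) i = j) :
    -- reflexivity on `Dom`
    (∀ (b : List ℕ) (i : ℕ), b.Nodup → Forces B ![b, b] (Θ i i) →
      Forces B ![b, b] (Θ i i)) ∧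
    -- symmetry
    (∀ (b c : List ℕ) (i j : ℕ), b.Nodup → c.Nodup →
      Forces B ![b, b] (Θ i i) → Forces B ![c, c] (Θ j j) →
      Forces B ![b, c] (Θ i j) → Forces B ![c, b] (Θ j i)) ∧
    -- transitivity
    (∀ (b c d : List ℕ) (i j k : ℕ), b.Nodup → c.Nodup → d.Nodup →
      Forces B ![b, b] (Θ i i) → Forces B ![c, c] (Θ j j) → Forces B ![d, d] (Θ k k) →
      Forces B ![b, c] (Θ i j) → Forces B ![c, d] (Θ j k) →
      Forces B ![b, d] (Θ i k)) := by
  set φ₀ : FormL LB 2 := .conj fun m => Θ m.unpair.1 m.unpair.2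
  have hgen : ∀ {g₁ g₂ : ℕ ≃ ℕ}, GenericFor B ![⇑g₁, ⇑g₂] φ₀ → ∀ i j,
      GenericFor B ![⇑g₁, ⇑g₂] (Θ i j) := fun h i j => by
    simpa using h.of_conj (Nat.pair i j)
  refine ⟨fun _ _ _ h => h, ?_, ?_⟩
  · intro b c i j hb hc _ _ hbc
    refine forces_of_forall_not_forces_negat B (hconj j i) fun q hq hqcb hneg => ?_
    obtain ⟨g, hgq, hg⟩ := exists_pairwise_genericFor_equivs B φ₀ ![q 1, q 0]
      (Fin.forall_fin_two.mpr ⟨hq 1, hq 0⟩)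
    have hij : F.pullbackMap (g 0) (g 1) i = j := (hΘ _ _ i j).mp <|
      holds_pair_of_forces B (hgen (hg 0 1 (by decide)) i j) (validCond_pair hb hc)
        ((hgq 0).of_prefix (hqcb 1)) ((hgq 1).of_prefix (hqcb 0)) hbc
    exact not_holds_of_holds_negat B
      (holds_pair_of_forces B (hgen (hg 1 0 (by decide)) j i).negat hq (hgq 1) (hgq 0) hneg)
      ((hΘ _ _ j i).mpr (F.pullbackMap_symm_apply hij))
  · intro b c d i j k hb hc hd _ _ _ hbc hcd
    refine forces_of_forall_not_forces_negat B (hconj i k) fun q hq hqbd hneg => ?_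
    obtain ⟨g, hgq, hg⟩ := exists_pairwise_genericFor_equivs B φ₀ ![q 0, c, q 1]
      (fun a => by fin_cases a; exacts [hq 0, hc, hq 1])
    have hij : F.pullbackMap (g 0) (g 1) i = j := (hΘ _ _ i j).mp <|
      holds_pair_of_forces B (hgen (hg 0 1 (by decide)) i j) (validCond_pair hb hc)
        ((hgq 0).of_prefix (hqbd 0)) (hgq 1) hbc
    have hjk : F.pullbackMap (g 1) (g 2) j = k := (hΘ _ _ j k).mp <|
      holds_pair_of_forces B (hgen (hg 1 2 (by decide)) j k) (validCond_pair hc hd)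
        (hgq 1) ((hgq 2).of_prefix (hqbd 1)) hcd
    exact not_holds_of_holds_negat B
      (holds_pair_of_forces B (hgen (hg 0 2 (by decide)) i k).negat hq (hgq 0) (hgq 2) hneg)
      ((hΘ _ _ i k).mpr (F.pullbackMap_trans_apply hij hjk))

/-- **Lemma 3.9.**  Let `F : Iso(B) → Iso(A)` be a Borel functor with `A = F(B)`,
and let `Θ i j` be the sentence of the forcing language for `(B*)²` expressing
`F(B_{ġ₁}, ġ₂⁻¹∘ġ₁, B_{ġ₂})(i) = j` (a countable conjunction; its meaning is pinned
down by the hypothesis `hΘ` on all pairs of bijections).  Define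
`Dom = {(b̄,i) : (b̄,b̄) ⊩ Θ i i}` and `(b̄,i) ∼ (c̄,j) ⟺ (b̄,c̄) ⊩ Θ i j`.
Then `∼` is an equivalence relation on `Dom`. -/
theorem sim_is_equivalence (LA LB : ℕ → ℕ) (A : Str LA) (B : Str LB)
    (F : IsoFunctor B A) (hBorel : IsBorelFunctor F)
    (hFB : (F.obj (selfCopy B)).1 = A)
    (Θ : ℕ → ℕ → FormL LB 2)
    (hconj : ∀ i j : ℕ, ∃ ψ : ℕ → FormL LB 2, Θ i j = FormL.conj ψ)
    (hΘ : ∀ (g₁ g₂ : ℕ ≃ ℕ) (i j : ℕ),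
      Holds B ![⇑g₁, ⇑g₂] (Θ i j) ↔
        F.map (copyOf B g₁) (copyOf B g₂) (g₁.trans g₂.symm)
          (pullback_mor B g₁ g₂) i = j) :
    -- reflexivity on `Dom`
    (∀ (b : List ℕ) (i : ℕ), b.Nodup → Forces B ![b, b] (Θ i i) →
      Forces B ![b, b] (Θ i i)) ∧
    -- symmetry
    (∀ (b c : List ℕ) (i j : ℕ), b.Nodup → c.Nodup →
      Forces B ![b, b] (Θ i i) → Forces B ![c, c] (Θ j j) →
      Forces B ![b, c] (Θ i j) → Forces B ![c, b] (Θ j i)) ∧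
    -- transitivity
    (∀ (b c d : List ℕ) (i j k : ℕ), b.Nodup → c.Nodup → d.Nodup →
      Forces B ![b, b] (Θ i i) → Forces B ![c, c] (Θ j j) → Forces B ![d, d] (Θ k k) →
      Forces B ![b, c] (Θ i j) → Forces B ![c, d] (Θ j k) →
      Forces B ![b, d] (Θ i k)) :=
  sim_is_equivalence_general LA LB A B F Θ hconj hΘ

end Paper
end

section
/- Let A be a countable structure. The following are equivalent: (1) there is a continuous group isomorphism between Aut(A) and S_∞; (2) there are an n ∈ ω, an L_{ω₁ω}-definable (equivalently, automorphism-invariant) set D ⊆ A^n, and an L_{ω₁ω}-definable (equivalently, automorphism-invariant) equivalence relation E ⊆ D² with infinitely many equivalence classes, such that the E-equivalence classes are absolutely indiscernible (every permutation of the set of E-equivalence classes extends to an automorphism of A) and, in the expansion of A by a relation naming each E-equivalence class, every element of A is L_{ω₁ω}-definable (equivalently, the only automorphism of A fixing each E-equivalence class setwise is the identity). -/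
/-!
(1) ⇒ (2): by continuity, the `H`-stabiliser of `0` is open in `Aut(A)`, so it contains the
pointwise stabiliser of some tuple `ā`. Hence `g • ā ↦ H g 0` is well defined on the orbit `D`
of `ā`. Its fibres, the classes of `E`, are in `Aut(A)`-equivariant bijection with `ℕ` acted on
through `H`, so `Aut(A)` permutes them faithfully and realises every permutation.

(2) ⇒ (1): `Aut(A)` acts on the countably infinite set `D / E`. Absolute indiscernibility says
that this action is onto `Sym(D / E)`, rigidity that it is faithful, and it is continuous because
the image of a class under `g` only depends on `g` on the finitely many entries of a
representative tuple.
-/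

namespace Paper

open Function Topology Filter MulAction

theorem bijective_toPermHom_of_equivariant {G α β : Type*} [Group G] [MulAction G α]
    (φ : G ≃* Equiv.Perm β) (f : α ≃ β) (hf : ∀ (g : G) a, f (g • a) = φ g (f a)) :
    Bijective (toPermHom G α) := by
  have hconj : ⇑(toPermHom G α) = f.permCongr.symm ∘ φ := by
    ext g a
    rw [comp_apply, Equiv.permCongr_symm_apply, ← hf, Equiv.symm_apply_apply]
    rfl
  rw [hconj]
  exact f.permCongr.symm.bijective.comp φ.bijective

section

variable {G : Subgroup (Equiv.Perm ℕ)} {n : ℕ}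

theorem continuous_smul_tuple (v : Fin n → ℕ) : Continuous fun g : G => g • v :=
  have hcoe : Continuous fun g : G => ((g : Equiv.Perm ℕ) : ℕ → ℕ) :=
    continuous_induced_dom.comp continuous_subtype_val
  continuous_pi fun k => (continuous_apply (v k)).comp hcoe

theorem exists_tuple_fixing_of_mem_nhds {U : Set G} (hU : U ∈ 𝓝 (1 : G)) :
    ∃ (n : ℕ) (ā : Fin n → ℕ), ∀ g : G, g • ā = ā → g ∈ U := by
  have hnhds : 𝓝 (1 : G) = comap (fun g : G => ((g : Equiv.Perm ℕ) : ℕ → ℕ)) (𝓝 id) := by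
    rw [nhds_induced, nhds_induced, comap_comap]
    rfl
  rw [hnhds, mem_comap, nhds_pi] at hU
  obtain ⟨S, hS, hSU⟩ := hU
  obtain ⟨I, t, ht, hIS⟩ := mem_pi'.1 hS
  refine ⟨I.sup id + 1, fun k => k, fun g hg => hSU (hIS fun i hi => ?_)⟩
  have hfix : (g : Equiv.Perm ℕ) i = i :=
    congrFun hg ⟨i, Nat.lt_succ_of_le (I.le_sup (f := id) hi)⟩
  show (g : Equiv.Perm ℕ) i ∈ t i
  rw [hfix]
  exact mem_of_mem_nhds (ht i)

structure TupleEquivalence (G : Subgroup (Equiv.Perm ℕ)) (n : ℕ) where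
  D : Set (Fin n → ℕ)
  E : (Fin n → ℕ) → (Fin n → ℕ) → Prop
  smul_mem : ∀ g : Equiv.Perm ℕ, g ∈ G → ∀ v ∈ D, (fun k => g (v k)) ∈ D
  smul_rel : ∀ g : Equiv.Perm ℕ, g ∈ G → ∀ v ∈ D, ∀ w ∈ D,
    E v w → E (fun k => g (v k)) (fun k => g (w k))
  refl : ∀ v ∈ D, E v v
  symm : ∀ v ∈ D, ∀ w ∈ D, E v w → E w v
  trans : ∀ v ∈ D, ∀ w ∈ D, ∀ u ∈ D, E v w → E w u → E v u

namespace TupleEquivalence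

variable (S : TupleEquivalence G n)

def setoid : Setoid S.D where
  r v w := S.E v w
  iseqv := ⟨fun v => S.refl v v.2, fun {v w} => S.symm v v.2 w w.2,
    fun {v w u} => S.trans v v.2 w w.2 u u.2⟩

abbrev Classes : Type := Quotient S.setoid

theorem mk_eq_mk {v w : S.D} : (⟦v⟧ : S.Classes) = ⟦w⟧ ↔ S.E v w := Quotient.eq

instance : MulAction G S.Classes where
  smul g := Quotient.map (fun v => ⟨g • v.1, S.smul_mem g g.2 v v.2⟩)
    fun v w => S.smul_rel g g.2 v v.2 w w.2
  one_smul := Quotient.ind fun _ => rfl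
  mul_smul _ _ := Quotient.ind fun _ => rfl

theorem smul_mk (g : G) (v : S.D) :
    g • (⟦v⟧ : S.Classes) = ⟦⟨g • v.1, S.smul_mem g g.2 v v.2⟩⟧ := rfl

theorem infinite_classes_iff : Infinite S.Classes ↔
    ∃ r : ℕ → (Fin n → ℕ), (∀ k, r k ∈ S.D) ∧ ∀ k l : ℕ, k ≠ l → ¬S.E (r k) (r l) := by
  constructor
  · intro _
    let q := Infinite.natEmbedding S.Classes
    refine ⟨fun k => (q k).out.1, fun k => (q k).out.2, fun k l hkl hE => hkl (q.injective ?_)⟩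
    rw [← Quotient.out_eq (q k), ← Quotient.out_eq (q l)]
    exact S.mk_eq_mk.2 hE
  · rintro ⟨r, hrD, hr⟩
    refine Infinite.of_injective (fun k => (⟦⟨r k, hrD k⟩⟧ : S.Classes)) fun k l hkl => ?_
    by_contra hne
    exact hr k l hne (S.mk_eq_mk.1 hkl)

theorem injective_toPermHom_iff : Injective (toPermHom G S.Classes) ↔
    ∀ g : Equiv.Perm ℕ, g ∈ G → (∀ v ∈ S.D, S.E (fun k => g (v k)) v) → g = 1 := by
  have hker : ∀ g : G, toPermHom G S.Classes g = 1 ↔ ∀ v ∈ S.D, S.E (g • v) v := by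
    intro g
    simp only [Equiv.Perm.ext_iff, Quotient.forall, Subtype.forall, toPermHom_apply,
      toPerm_apply, Equiv.Perm.one_apply, smul_mk, mk_eq_mk]
  simp only [injective_iff_map_eq_one, hker, Subtype.forall, Subgroup.mk_eq_one]
  rfl

theorem toPermHom_eq_iff (g : G) (τ : Equiv.Perm S.Classes) (π : (Fin n → ℕ) → (Fin n → ℕ))
    (hπD : ∀ v ∈ S.D, π v ∈ S.D) (hτ : ∀ v : S.D, τ ⟦v⟧ = ⟦⟨π v, hπD v v.2⟩⟧) :
    toPermHom G S.Classes g = τ ↔ ∀ v ∈ S.D, S.E (g • v) (π v) := by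
  simp only [Equiv.ext_iff, Quotient.forall, Subtype.forall, toPermHom_apply, toPerm_apply,
    smul_mk, hτ, mk_eq_mk]

theorem surjective_toPermHom_iff : Surjective (toPermHom G S.Classes) ↔
    ∀ π : (Fin n → ℕ) → (Fin n → ℕ),
      (∀ v ∈ S.D, π v ∈ S.D) →
      (∀ v ∈ S.D, ∀ w ∈ S.D, (S.E v w ↔ S.E (π v) (π w))) →
      (∀ w ∈ S.D, ∃ v ∈ S.D, S.E (π v) w) →
      ∃ g : Equiv.Perm ℕ, g ∈ G ∧ ∀ v ∈ S.D, S.E (fun k => g (v k)) (π v) := by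
  constructor
  · intro hsurj π hπD hπE hπsurj
    let τ : S.Classes → S.Classes :=
      Quotient.map (fun v => ⟨π v, hπD v v.2⟩) fun v w => (hπE v v.2 w w.2).1
    have hτ : Bijective τ := by
      refine ⟨?_, ?_⟩
      · rintro ⟨v⟩ ⟨w⟩ h
        exact S.mk_eq_mk.2 ((hπE v v.2 w w.2).2 (S.mk_eq_mk.1 h))
      · rintro ⟨w⟩
        obtain ⟨v, hv, hvw⟩ := hπsurj w w.2
        exact ⟨⟦⟨v, hv⟩⟧, S.mk_eq_mk.2 hvw⟩
    obtain ⟨g, hg⟩ := hsurj (Equiv.ofBijective τ hτ)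
    exact ⟨g, g.2, (S.toPermHom_eq_iff g _ π hπD fun _ => rfl).1 hg⟩
  · intro hind τ
    classical
    let π : (Fin n → ℕ) → (Fin n → ℕ) := fun v =>
      if hv : v ∈ S.D then (τ ⟦⟨v, hv⟩⟧).out.1 else v
    have hπD : ∀ v ∈ S.D, π v ∈ S.D := fun v hv => by
      simp only [π, dif_pos hv]
      exact Subtype.prop _
    have hτ : ∀ v : S.D, τ ⟦v⟧ = ⟦⟨π v, hπD v v.2⟩⟧ := fun v => by
      simp only [π, dif_pos v.2, Subtype.coe_eta, Quotient.out_eq]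
    have hπE : ∀ v ∈ S.D, ∀ w ∈ S.D, (S.E v w ↔ S.E (π v) (π w)) := fun v hv w hw => by
      have h := τ.apply_eq_iff_eq (x := ⟦⟨v, hv⟩⟧) (y := ⟦⟨w, hw⟩⟧)
      rw [hτ, hτ, S.mk_eq_mk, S.mk_eq_mk] at h
      exact h.symm
    have hπsurj : ∀ w ∈ S.D, ∃ v ∈ S.D, S.E (π v) w := fun w hw => by
      obtain ⟨v, hv⟩ := (τ.symm ⟦⟨w, hw⟩⟧).exists_rep
      refine ⟨v.1, v.2, (S.mk_eq_mk (v := ⟨π v, hπD v v.2⟩) (w := ⟨w, hw⟩)).1 ?_⟩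
      rw [← hτ, hv, Equiv.apply_symm_apply]
    obtain ⟨g, hg, hgπ⟩ := hind π hπD hπE hπsurj
    exact ⟨⟨g, hg⟩, (S.toPermHom_eq_iff ⟨g, hg⟩ τ π hπD hτ).2 hgπ⟩

theorem isLocallyConstant_smul (q : S.Classes) : IsLocallyConstant fun g : G => g • q := by
  induction q using Quotient.ind with | _ v => ?_
  have hcont : Continuous fun g : G => (⟨g • v.1, S.smul_mem g g.2 v v.2⟩ : S.D) :=
    (continuous_smul_tuple v.1).subtype_mk _
  exact ((IsLocallyConstant.iff_continuous _).2 hcont).comp _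

theorem exists_continuous_mulEquiv [Infinite S.Classes] (h : Bijective (toPermHom G S.Classes)) :
    ∃ H : G ≃* Equiv.Perm ℕ, Continuous fun g : G => ((H g : Equiv.Perm ℕ) : ℕ → ℕ) := by
  obtain ⟨e⟩ : Nonempty (S.Classes ≃ ℕ) := nonempty_equiv_of_countable
  refine ⟨(MulEquiv.ofBijective _ h).trans e.permCongrHom, continuous_pi fun m => ?_⟩
  exact ((S.isLocallyConstant_smul (e.symm m)).comp e).continuous

end TupleEquivalence

section Orbit

variable (φ : G ≃* Equiv.Perm ℕ) (ā : Fin n → ℕ)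

noncomputable def orbitLabel : (Fin n → ℕ) → ℕ :=
  extend (fun g : G => g • ā) (fun g => φ g 0) 0

variable {φ ā}

theorem orbitLabel_smul (hā : ∀ g : G, g • ā = ā → φ g 0 = 0) (g : G) :
    orbitLabel φ ā (g • ā) = φ g 0 := by
  refine FactorsThrough.extend_apply (fun a b hab => ?_) _ g
  have hfix : φ (b⁻¹ * a) 0 = 0 := hā _ (by rw [mul_smul, hab, inv_smul_smul])
  rwa [map_mul, map_inv, Equiv.Perm.mul_apply, Equiv.Perm.inv_eq_iff_eq] at hfix

theorem orbitLabel_smul_of_mem (hā : ∀ g : G, g • ā = ā → φ g 0 = 0) (g : G) {v : Fin n → ℕ}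
    (hv : v ∈ orbit G ā) :
    orbitLabel φ ā (g • v) = φ g (orbitLabel φ ā v) := by
  obtain ⟨h, rfl⟩ := hv
  rw [smul_smul, orbitLabel_smul hā, orbitLabel_smul hā, map_mul, Equiv.Perm.mul_apply]

noncomputable def orbitTupleEquivalence (hā : ∀ g : G, g • ā = ā → φ g 0 = 0) :
    TupleEquivalence G n where
  D := orbit G ā
  E v w := orbitLabel φ ā v = orbitLabel φ ā w
  smul_mem g hg _ := mem_orbit_of_mem_orbit (⟨g, hg⟩ : G)
  smul_rel g hg v hv w hw h := by
    change orbitLabel φ ā ((⟨g, hg⟩ : G) • v) = orbitLabel φ ā ((⟨g, hg⟩ : G) • w)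
    rw [orbitLabel_smul_of_mem hā ⟨g, hg⟩ hv, orbitLabel_smul_of_mem hā ⟨g, hg⟩ hw, h]
  refl _ _ := rfl
  symm _ _ _ _ := Eq.symm
  trans _ _ _ _ _ _ := Eq.trans

noncomputable def orbitClassesEquiv (hā : ∀ g : G, g • ā = ā → φ g 0 = 0) :
    (orbitTupleEquivalence hā).Classes ≃ ℕ := by
  refine Equiv.ofBijective (Quotient.lift (fun v => orbitLabel φ ā v.1) fun _ _ => id) ⟨?_, ?_⟩
  · rintro ⟨v⟩ ⟨w⟩ h
    exact Quotient.sound h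
  · intro m
    refine ⟨⟦⟨φ.symm (Equiv.swap 0 m) • ā, mem_orbit _ _⟩⟧, ?_⟩
    show orbitLabel φ ā _ = m
    rw [orbitLabel_smul hā, MulEquiv.apply_symm_apply, Equiv.swap_apply_left]

theorem bijective_toPermHom_orbitTupleEquivalence (hā : ∀ g : G, g • ā = ā → φ g 0 = 0) :
    Bijective (toPermHom G (orbitTupleEquivalence hā).Classes) :=
  bijective_toPermHom_of_equivariant φ (orbitClassesEquiv hā) fun g q => by
    induction q using Quotient.ind with | _ v => exact orbitLabel_smul_of_mem hā g v.2

end Orbit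

theorem exists_tupleEquivalence_of_continuous (H : G ≃* Equiv.Perm ℕ)
    (hH : Continuous fun g : G => ((H g : Equiv.Perm ℕ) : ℕ → ℕ)) :
    ∃ (n : ℕ) (S : TupleEquivalence G n),
      Infinite S.Classes ∧ Bijective (toPermHom G S.Classes) := by
  have hU : {g : G | H g 0 = 0} ∈ 𝓝 (1 : G) :=
    ((isOpen_discrete {0}).preimage ((continuous_apply 0).comp hH)).mem_nhds (by simp)
  obtain ⟨n, ā, hā⟩ := exists_tuple_fixing_of_mem_nhds hU
  exact ⟨n, orbitTupleEquivalence hā, (orbitClassesEquiv hā).infinite_iff.2 inferInstance,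
    bijective_toPermHom_orbitTupleEquivalence hā⟩

end

/-- **Theorem 4.3.**  Let `A` be a countable structure.  There is a continuous group
isomorphism between `Aut(A)` and `S_∞` if and only if `A` has an invariantly
(`L_{ω₁ω}`-)definable set of absolutely indiscernible equivalence classes on `A^n`
with infinitely many classes, such that moreover every element of `A` is definable
from these classes: the only automorphism of `A` fixing each class setwise is the
identity. -/
theorem aut_iso_Sinfty_iff (L : ℕ → ℕ) (A : Str L) :
    (∃ H : ↥(aut A) ≃* Equiv.Perm ℕ,
      Continuous fun g : ↥(aut A) => ((H g : Equiv.Perm ℕ) : ℕ → ℕ)) ↔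
    (∃ (n : ℕ) (D : Set (Fin n → ℕ)) (E : (Fin n → ℕ) → (Fin n → ℕ) → Prop),
      -- `D` is invariant under all automorphisms of `A`
      (∀ g : Equiv.Perm ℕ, IsIso A A g → ∀ v ∈ D, (fun k => g (v k)) ∈ D) ∧
      -- `E` is invariant under all automorphisms of `A`
      (∀ g : Equiv.Perm ℕ, IsIso A A g → ∀ v ∈ D, ∀ w ∈ D,
        E v w → E (fun k => g (v k)) (fun k => g (w k))) ∧
      -- `E` is an equivalence relation on `D`
      (∀ v ∈ D, E v v) ∧
      (∀ v ∈ D, ∀ w ∈ D, E v w → E w v) ∧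
      (∀ v ∈ D, ∀ w ∈ D, ∀ u ∈ D, E v w → E w u → E v u) ∧
      -- `E` has infinitely many equivalence classes
      (∃ r : ℕ → (Fin n → ℕ), (∀ k, r k ∈ D) ∧ ∀ k l : ℕ, k ≠ l → ¬E (r k) (r l)) ∧
      -- the `E`-classes are absolutely indiscernible
      (∀ π : (Fin n → ℕ) → (Fin n → ℕ),
        (∀ v ∈ D, π v ∈ D) →
        (∀ v ∈ D, ∀ w ∈ D, (E v w ↔ E (π v) (π w))) →
        (∀ w ∈ D, ∃ v ∈ D, E (π v) w) →
        ∃ g : Equiv.Perm ℕ, IsIso A A g ∧ ∀ v ∈ D, E (fun k => g (v k)) (π v)) ∧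
      -- every element is definable from the classes: the only automorphism fixing
      -- each `E`-class setwise is the identity
      (∀ g : Equiv.Perm ℕ, IsIso A A g →
        (∀ v ∈ D, E (fun k => g (v k)) v) → g = 1)) := by
  constructor
  · rintro ⟨H, hH⟩
    obtain ⟨n, S, hinf, hρ⟩ := exists_tupleEquivalence_of_continuous H hH
    exact ⟨n, S.D, S.E, S.smul_mem, S.smul_rel, S.refl, S.symm, S.trans,
      S.infinite_classes_iff.1 hinf, S.surjective_toPermHom_iff.1 hρ.2,
      S.injective_toPermHom_iff.1 hρ.1⟩
  · rintro ⟨n, D, E, hD, hE, hrefl, hsymm, htrans, hinf, hind, hrigid⟩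
    let S : TupleEquivalence (aut A) n := ⟨D, E, hD, hE, hrefl, hsymm, htrans⟩
    have : Infinite S.Classes := S.infinite_classes_iff.2 hinf
    exact S.exists_continuous_mulEquiv
      ⟨S.injective_toPermHom_iff.2 hrigid, S.surjective_toPermHom_iff.2 hind⟩

end Paper
end
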